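/- arXiv:1107.4142 — 4 statements merged into one kernel-verified Lean document; each statement's English description precedes it below -/
import Mathlib

section
/- Under assumptions (A1)–(A3), let L(t), t ∈ [0,T], be a time-varying rate matrix and μ : [0,T] → M_1(Z) an absolutely continuous path with μ̇(t) = L(t)^⊤ μ(t) a.e., μ(0) = ν, μ(T) = ξ, and finite running cost I_{[0,T]}(μ,L). Let 0 < α < ∞ and T' = T/α, and define the time-scaled path μ̃(t) = μ(αt) for t ∈ [0,T']. Then μ̃(0) = ν, μ̃(T') = ξ, μ̃ satisfies μ̃̇(t) = L̃(t)^⊤ μ̃(t) with the rate matrix L̃(t) = α L(αt), and S_{[0,T']}(μ̃|ν) ≤ I_{[0,T]}(μ,L) + |log α| ∫_0^T Σ_{(i,j)∈E} μ(t)(i) l_{i,j}(t) dt + (|1−α|/α) C r T. -/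
open MeasureTheory Set ENNReal Filter

noncomputable section

/-- The Legendre conjugate `τ*(u) = (u+1)·log(u+1) − u`.  Since `Real.log 0 = 0`
in Mathlib, this gives `τ*(-1) = 1`, matching the convention of the paper; the
value for `u < -1` is irrelevant since all arguments below are `≥ -1`. -/
def tauStar (u : ℝ) : ℝ := (u + 1) * Real.log (u + 1) - u

/-- The mean field model: state space `Fin r`, directed edge set `E` without
self-loops, and transition rate functions `lam i j`, together with assumptions
(A1) (irreducibility), (A2) (Lipschitz rates) and (A3) (rates on edges bounded
below by `c > 0`); `Cb` is the upper bound on the rates (a consequence of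
(A2) and compactness of the simplex). -/
structure MeanFieldModel (r : ℕ) where
  E : Finset (Fin r × Fin r)
  no_diag : ∀ i : Fin r, (i, i) ∉ E
  /-- (A1): the directed graph `(Z, E)` is irreducible. -/
  irreducible : ∀ i j : Fin r, Relation.ReflTransGen (fun a b => (a, b) ∈ E) i j
  lam : Fin r → Fin r → (Fin r → ℝ) → ℝ
  /-- (A2): each rate function is Lipschitz on the simplex. -/
  lam_lipschitz : ∀ p ∈ E, ∃ K : NNReal, LipschitzOnWith K (lam p.1 p.2) (stdSimplex ℝ (Fin r))
  c : ℝ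
  c_pos : 0 < c
  /-- (A3): rates of admissible jumps are uniformly bounded away from zero. -/
  lam_lower : ∀ p ∈ E, ∀ μ ∈ stdSimplex ℝ (Fin r), c ≤ lam p.1 p.2 μ
  /-- rates vanish off the edge set -/
  lam_off : ∀ i j : Fin r, i ≠ j → (i, j) ∉ E → ∀ μ : Fin r → ℝ, lam i j μ = 0
  /-- diagonal convention `λ_{i,i} = −Σ_{j≠i} λ_{i,j}` -/
  lam_diag : ∀ i : Fin r, ∀ μ : Fin r → ℝ,
    lam i i μ = -∑ j ∈ Finset.univ.filter (fun j => j ≠ i), lam i j μ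
  Cb : ℝ
  /-- upper bound on the rates -/
  lam_upper : ∀ p ∈ E, ∀ μ ∈ stdSimplex ℝ (Fin r), lam p.1 p.2 μ ≤ Cb

variable {r : ℕ}

/-- A time-varying rate matrix `L(t)` adapted to the model: measurable entries,
nonnegative off-diagonal entries, entries vanishing off the edge set, and the
diagonal convention `l_{i,i}(t) = −Σ_{j≠i} l_{i,j}(t)`. -/
def IsRateMatrix (M : MeanFieldModel r) (L : ℝ → Fin r → Fin r → ℝ) : Prop :=
  (∀ i j : Fin r, Measurable fun t => L t i j) ∧
  (∀ t : ℝ, ∀ i j : Fin r, i ≠ j → 0 ≤ L t i j) ∧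
  (∀ t : ℝ, ∀ i j : Fin r, i ≠ j → (i, j) ∉ M.E → L t i j = 0) ∧
  (∀ t : ℝ, ∀ i : Fin r,
    L t i i = -∑ j ∈ Finset.univ.filter (fun j => j ≠ i), L t i j)

/-- `μ` is absolutely continuous on `[0,T]` with `μ̇(t) = L(t)ᵀ μ(t)` a.e.,
expressed in integral form:  `μ(t) = μ(0) + ∫_0^t L(s)ᵀ μ(s) ds`. -/
def SolvesODE (L : ℝ → Fin r → Fin r → ℝ) (μ : ℝ → Fin r → ℝ) (T : ℝ) : Prop :=
  (∀ i : Fin r, IntegrableOn (fun t => ∑ j, L t j i * μ t j) (Icc 0 T)) ∧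
  ∀ t ∈ Icc (0 : ℝ) T, ∀ i : Fin r,
    μ t i = μ 0 i + ∫ s in Ioc (0 : ℝ) t, ∑ j, L s j i * μ s j

/-- `μ` is absolutely continuous on `[0,∞)` with `μ̇(t) = −L(t)ᵀ μ(t)` a.e.
(reversed-time dynamics), in integral form. -/
def SolvesReversedODE (L : ℝ → Fin r → Fin r → ℝ) (μ : ℝ → Fin r → ℝ) : Prop :=
  (∀ T : ℝ, 0 < T → ∀ i : Fin r,
    IntegrableOn (fun t => ∑ j, L t j i * μ t j) (Icc 0 T)) ∧
  ∀ t : ℝ, 0 ≤ t → ∀ i : Fin r,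
    μ t i = μ 0 i - ∫ s in Ioc (0 : ℝ) t, ∑ j, L s j i * μ s j

/-- The running cost
`I_{[0,T]}(μ, L) = ∫_0^T Σ_{(i,j)∈E} μ(t)(i) λ_{i,j}(μ(t)) τ*( l_{i,j}(t)/λ_{i,j}(μ(t)) − 1 ) dt`. -/
def runningCost (M : MeanFieldModel r) (μ : ℝ → Fin r → ℝ)
    (L : ℝ → Fin r → Fin r → ℝ) (T : ℝ) : ℝ≥0∞ :=
  ∫⁻ t in Ioc (0 : ℝ) T, ENNReal.ofReal (∑ p ∈ M.E,
    μ t p.1 * M.lam p.1 p.2 (μ t) * tauStar (L t p.1 p.2 / M.lam p.1 p.2 (μ t) - 1))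

/-- The infinite-horizon running cost on `[0, ∞)`. -/
def runningCostInf (M : MeanFieldModel r) (μ : ℝ → Fin r → ℝ)
    (L : ℝ → Fin r → Fin r → ℝ) : ℝ≥0∞ :=
  ∫⁻ t in Ioi (0 : ℝ), ENNReal.ofReal (∑ p ∈ M.E,
    μ t p.1 * M.lam p.1 p.2 (μ t) * tauStar (L t p.1 p.2 / M.lam p.1 p.2 (μ t) - 1))

/-- `S_{[0,T]}(μ | ν)`: the infimum of the running cost over all time-varying
rate matrices `L` with `μ̇ = Lᵀ μ` a.e., provided `μ(0) = ν`, `μ` is absolutely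
continuous and takes values in `M₁(Z)`; `+∞` otherwise (the infimum over an
empty family being `⊤`). -/
def SPath (M : MeanFieldModel r) (T : ℝ) (ν : Fin r → ℝ) (μ : ℝ → Fin r → ℝ) : ℝ≥0∞ :=
  ⨅ (L : ℝ → Fin r → Fin r → ℝ)
    (_ : IsRateMatrix M L ∧ SolvesODE L μ T ∧ μ 0 = ν ∧
      ∀ t ∈ Icc (0 : ℝ) T, μ t ∈ stdSimplex ℝ (Fin r)),
    runningCost M μ L T

/-- `S_T(ξ | ν) = inf { S_{[0,T]}(μ|ν) : μ(0) = ν, μ(T) = ξ }`. -/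
def SEnd (M : MeanFieldModel r) (T : ℝ) (ν ξ : Fin r → ℝ) : ℝ≥0∞ :=
  ⨅ (μ : ℝ → Fin r → ℝ) (_ : μ 0 = ν ∧ μ T = ξ), SPath M T ν μ

/-- The quasipotential `V(ξ | ν) = inf_{T > 0} S_T(ξ | ν)`. -/
def quasipotential (M : MeanFieldModel r) (ν ξ : Fin r → ℝ) : ℝ≥0∞ :=
  ⨅ (T : ℝ) (_ : 0 < T), SEnd M T ν ξ

/-- Equivalence of points: `ν ∼ ξ` iff `V(ξ|ν) = V(ν|ξ) = 0`. -/
def VEquiv (M : MeanFieldModel r) (ν ξ : Fin r → ℝ) : Prop :=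
  quasipotential M ν ξ = 0 ∧ quasipotential M ξ ν = 0

/-- `s` satisfies the dynamic programming equation
`s(ξ) = inf_{ν ∈ M₁(Z)} [ s(ν) + S_T(ξ|ν) ]` for every `T > 0`. -/
def SatisfiesDPE (M : MeanFieldModel r) (s : (Fin r → ℝ) → ℝ) : Prop :=
  ∀ T : ℝ, 0 < T → ∀ ξ ∈ stdSimplex ℝ (Fin r),
    ENNReal.ofReal (s ξ) =
      ⨅ ν ∈ stdSimplex ℝ (Fin r), (ENNReal.ofReal (s ν) + SEnd M T ν ξ)

/-- A solution of the McKean–Vlasov equation `μ̇(t) = A_{μ(t)}ᵀ μ(t)` on `[0,∞)`,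
as a path in `M₁(Z)`, in integral form. -/
def IsMVSolution (M : MeanFieldModel r) (η : ℝ → Fin r → ℝ) : Prop :=
  (∀ t : ℝ, 0 ≤ t → η t ∈ stdSimplex ℝ (Fin r)) ∧
  (∀ T : ℝ, 0 < T → ∀ i : Fin r,
    IntegrableOn (fun t => ∑ j, M.lam j i (η t) * η t j) (Icc 0 T)) ∧
  ∀ t : ℝ, 0 ≤ t → ∀ i : Fin r,
    η t i = η 0 i + ∫ s in Ioc (0 : ℝ) t, ∑ j, M.lam j i (η s) * η s j

/-- A solution of the time-reversed McKean–Vlasov equation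
`η̇(t) = −A_{η(t)}ᵀ η(t)` on `[0,∞)`, in integral form. -/
def IsReversedMVSolution (M : MeanFieldModel r) (η : ℝ → Fin r → ℝ) : Prop :=
  (∀ T : ℝ, 0 < T → ∀ i : Fin r,
    IntegrableOn (fun t => ∑ j, M.lam j i (η t) * η t j) (Icc 0 T)) ∧
  ∀ t : ℝ, 0 ≤ t → ∀ i : Fin r,
    η t i = η 0 i - ∫ s in Ioc (0 : ℝ) t, ∑ j, M.lam j i (η s) * η s j

/-- `ξ₀` is the unique globally asymptotically stable equilibrium of the
McKean–Vlasov equation: `A_{ξ₀}ᵀ ξ₀ = 0` and every solution with initial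
condition in `M₁(Z)` converges to `ξ₀`. -/
def IsUniqueGASEquilibrium (M : MeanFieldModel r) (ξ₀ : Fin r → ℝ) : Prop :=
  ξ₀ ∈ stdSimplex ℝ (Fin r) ∧
  (∀ i : Fin r, ∑ j, M.lam j i ξ₀ * ξ₀ j = 0) ∧
  ∀ η : ℝ → Fin r → ℝ, IsMVSolution M η → Tendsto η atTop (nhds ξ₀)

/-- The ω-limit set of a path: `Ω = ∩_{t>0} closure { μ(t') : t' ≥ t }`. -/
def omegaSet (η : ℝ → Fin r → ℝ) : Set (Fin r → ℝ) :=
  ⋂ t ∈ Ioi (0 : ℝ), closure (η '' Ici t)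

/-- Assumption (B): finitely many compact subsets `K 1, …, K l` of `M₁(Z)` such
that any two points of the same `K i` are equivalent, no point of `K i` is
equivalent to a point of `M₁(Z)` outside `K i`, and every ω-limit set of the
McKean–Vlasov equation is contained in some `K i`. -/
def AssumptionB (M : MeanFieldModel r) (l : ℕ) (K : Fin l → Set (Fin r → ℝ)) : Prop :=
  (∀ i, IsCompact (K i)) ∧
  (∀ i, K i ⊆ stdSimplex ℝ (Fin r)) ∧
  (∀ i, ∀ ν ∈ K i, ∀ ξ ∈ K i, VEquiv M ν ξ) ∧
  (∀ i, ∀ ν ∈ K i, ∀ ξ ∈ stdSimplex ℝ (Fin r), ξ ∉ K i → ¬ VEquiv M ν ξ) ∧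
  (∀ η : ℝ → Fin r → ℝ, IsMVSolution M η → ∃ i, omegaSet η ⊆ K i)

/-- `μ` is continuous and piecewise linear on `[0,T]`, with constant velocity on
each linear segment (linear interpolation between the breakpoints). -/
def PiecewiseLinear (μ : ℝ → Fin r → ℝ) (T : ℝ) : Prop :=
  ∃ (n : ℕ) (t : Fin (n + 1) → ℝ), StrictMono t ∧ t 0 = 0 ∧ t (Fin.last n) = T ∧
    ∀ k : Fin n, ∀ u ∈ Icc (t k.castSucc) (t k.succ), ∀ i : Fin r,
      μ u i = μ (t k.castSucc) i +
        (u - t k.castSucc) / (t k.succ - t k.castSucc) *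
          (μ (t k.succ) i - μ (t k.castSucc) i)

end

-- auxiliary lemmas

private lemma tauStar_scale {α x : ℝ} (hα : 0 < α) (hx : 0 ≤ x) :
    α⁻¹ * tauStar (α * x - 1) = tauStar (x - 1) + x * Real.log α + (α⁻¹ - 1) := by
  unfold tauStar
  rcases eq_or_lt_of_le hx with h | h
  · simp [← h]
  · have hlog : Real.log (α * x) = Real.log α + Real.log x := Real.log_mul hα.ne' h.ne'
    have h1 : α * x - 1 + 1 = α * x := by ring
    have h2 : x - 1 + 1 = x := by ring
    rw [h1, h2, hlog]
    field_simp
    ring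

private lemma edge_scale {α m lam l : ℝ} (hα : 0 < α) (hlam : 0 < lam) (hl : 0 ≤ l) :
    α⁻¹ * (m * lam * tauStar (α * l / lam - 1)) =
      m * lam * tauStar (l / lam - 1) + (m * l) * Real.log α + (α⁻¹ - 1) * (m * lam) := by
  have hx : 0 ≤ l / lam := div_nonneg hl hlam.le
  have hts := tauStar_scale hα hx
  have hll : l / lam * lam = l := div_mul_cancel₀ l hlam.ne'
  calc α⁻¹ * (m * lam * tauStar (α * l / lam - 1))
      = m * lam * (α⁻¹ * tauStar (α * (l / lam) - 1)) := by rw [mul_div_assoc]; ring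
    _ = m * lam * (tauStar (l / lam - 1) + (l / lam) * Real.log α + (α⁻¹ - 1)) := by rw [hts]
    _ = m * lam * tauStar (l / lam - 1) + (m * (l / lam * lam)) * Real.log α
        + (α⁻¹ - 1) * (m * lam) := by ring
    _ = _ := by rw [hll]

private lemma lintegral_Ioc_scale {α : ℝ} (hα : 0 < α) (T : ℝ) (h : ℝ → ℝ≥0∞) :
    ∫⁻ t in Ioc (0 : ℝ) (T / α), h (α * t) = ENNReal.ofReal α⁻¹ * ∫⁻ u in Ioc (0 : ℝ) T, h u := by
  have hemb : MeasurableEmbedding (fun x : ℝ => α * x) := by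
    have := (Homeomorph.mulLeft₀ α hα.ne').measurableEmbedding
    simpa [Homeomorph.coe_mulLeft₀] using this
  have hpre : (fun x : ℝ => α * x) ⁻¹' (Ioc (0 : ℝ) T) = Ioc (0 : ℝ) (T / α) := by
    rw [Set.preimage_const_mul_Ioc₀ _ _ hα, zero_div]
  calc ∫⁻ t in Ioc (0 : ℝ) (T / α), h (α * t)
      = ∫⁻ u, h u ∂(Measure.map (fun x : ℝ => α * x)
          (volume.restrict ((fun x : ℝ => α * x) ⁻¹' (Ioc (0 : ℝ) T)))) := by
        rw [hemb.lintegral_map, hpre]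
    _ = ∫⁻ u, h u ∂((Measure.map (fun x : ℝ => α * x) volume).restrict (Ioc (0 : ℝ) T)) := by
        rw [Measure.restrict_map (measurable_const_mul α) measurableSet_Ioc]
    _ = ENNReal.ofReal α⁻¹ * ∫⁻ u in Ioc (0 : ℝ) T, h u := by
        rw [Real.map_volume_mul_left hα.ne', Measure.restrict_smul, lintegral_smul_measure,
          abs_of_pos (inv_pos.mpr hα), smul_eq_mul]

/-- time-scaling.  If `μ` solves `μ̇ = Lᵀ μ` on `[0,T]` with
`μ(0) = ν`, `μ(T) = ξ` and finite running cost, and `α > 0`, `T' = T/α`, then the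
time-scaled path `μ̃(t) = μ(αt)` goes from `ν` to `ξ` in time `T'`, solves the
ODE with the rate matrix `L̃(t) = α L(αt)`, and
`S_{[0,T']}(μ̃|ν) ≤ I_{[0,T]}(μ,L) + |log α| ∫_0^T Σ μ(t)(i) l_{i,j}(t) dt + (|1−α|/α) C r T`. -/
theorem stmt5 (r : ℕ) (hr : 0 < r) (M : MeanFieldModel r) (T : ℝ) (hT : 0 < T)
    (L : ℝ → Fin r → Fin r → ℝ) (μ : ℝ → Fin r → ℝ) (ν ξ : Fin r → ℝ)
    (hL : IsRateMatrix M L) (hODE : SolvesODE L μ T)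
    (hsimp : ∀ t ∈ Icc (0 : ℝ) T, μ t ∈ stdSimplex ℝ (Fin r))
    (h0 : μ 0 = ν) (hTend : μ T = ξ)
    (hfin : runningCost M μ L T ≠ ⊤)
    (α : ℝ) (hα : 0 < α) :
    μ (α * 0) = ν ∧ μ (α * (T / α)) = ξ ∧
    IsRateMatrix M (fun t i j => α * L (α * t) i j) ∧
    SolvesODE (fun t i j => α * L (α * t) i j) (fun t => μ (α * t)) (T / α) ∧
    SPath M (T / α) ν (fun t => μ (α * t)) ≤
      runningCost M μ L T +
      ENNReal.ofReal |Real.log α| *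
        (∫⁻ t in Ioc (0 : ℝ) T, ENNReal.ofReal (∑ p ∈ M.E, μ t p.1 * L t p.1 p.2)) +
      ENNReal.ofReal (|1 - α| / α * M.Cb * r * T) := by
  have hTα : α * (T / α) = T := by field_simp
  have hTα0 : (0 : ℝ) ≤ T / α := div_nonneg hT.le hα.le
  have hmem : ∀ t ∈ Icc (0 : ℝ) (T / α), α * t ∈ Icc (0 : ℝ) T := by
    intro t ht
    refine ⟨mul_nonneg hα.le ht.1, ?_⟩
    calc α * t ≤ α * (T / α) := mul_le_mul_of_nonneg_left ht.2 hα.le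
      _ = T := hTα
  -- part 3
  have hRM : IsRateMatrix M (fun t i j => α * L (α * t) i j) := by
    refine ⟨fun i j => ((hL.1 i j).comp (measurable_const_mul α)).const_mul α,
      fun t i j hij => mul_nonneg hα.le (hL.2.1 _ i j hij),
      fun t i j hij hE => by
        show α * L (α * t) i j = 0
        rw [hL.2.2.1 _ i j hij hE, mul_zero],
      fun t i => ?_⟩
    show α * L (α * t) i i =
      -∑ j ∈ Finset.univ.filter (fun j => j ≠ i), α * L (α * t) i j
    rw [hL.2.2.2 (α * t) i, mul_neg, Finset.mul_sum]
  -- part 4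
  have hODE' : SolvesODE (fun t i j => α * L (α * t) i j) (fun t => μ (α * t)) (T / α) := by
    constructor
    · intro i
      have h1 : IntervalIntegrable (fun t => ∑ j, L t j i * μ t j) volume 0 T :=
        (intervalIntegrable_iff_integrableOn_Icc_of_le hT.le).2 (hODE.1 i)
      have h2 := (h1.comp_mul_left (c := α)).const_mul α
      rw [zero_div] at h2
      have h3 : IntegrableOn (fun t => α * ∑ j, L (α * t) j i * μ (α * t) j)
          (Icc 0 (T / α)) := (intervalIntegrable_iff_integrableOn_Icc_of_le hTα0).1 h2
      refine h3.congr_fun ?_ measurableSet_Icc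
      intro t _
      show α * (∑ j, L (α * t) j i * μ (α * t) j) = ∑ j, α * L (α * t) j i * μ (α * t) j
      rw [Finset.mul_sum]
      exact Finset.sum_congr rfl fun j _ => (mul_assoc _ _ _).symm
    · intro t ht i
      have hαt : α * t ∈ Icc (0 : ℝ) T := hmem t ht
      have key : (∫ s in Ioc (0 : ℝ) t, ∑ j, α * L (α * s) j i * μ (α * s) j)
          = ∫ s in Ioc (0 : ℝ) (α * t), ∑ j, L s j i * μ s j := by
        have e1 : ∀ s : ℝ, (∑ j, α * L (α * s) j i * μ (α * s) j)
            = α * ∑ j, L (α * s) j i * μ (α * s) j := by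
          intro s; rw [Finset.mul_sum]
          exact Finset.sum_congr rfl fun j _ => mul_assoc _ _ _
        simp_rw [e1]
        rw [← intervalIntegral.integral_of_le ht.1, intervalIntegral.integral_const_mul,
          ← smul_eq_mul,
          intervalIntegral.smul_integral_comp_mul_left (fun s => ∑ j, L s j i * μ s j) α,
          mul_zero, intervalIntegral.integral_of_le (mul_nonneg hα.le ht.1)]
      simp only [mul_zero]
      rw [key]
      exact hODE.2 (α * t) hαt i
  have hsimp' : ∀ t ∈ Icc (0 : ℝ) (T / α), (fun t => μ (α * t)) t ∈ stdSimplex ℝ (Fin r) :=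
    fun t ht => hsimp _ (hmem t ht)
  have h0' : (fun t => μ (α * t)) 0 = ν := by show μ (α * 0) = ν; rw [mul_zero]; exact h0
  refine ⟨by rw [mul_zero]; exact h0, by rw [hTα]; exact hTend, hRM, hODE', ?_⟩
  -- measurability of μ on [0,T]
  have hμae : ∀ i, AEMeasurable (fun u => μ u i) (volume.restrict (Ioc (0 : ℝ) T)) := by
    intro i
    have hcont : ContinuousOn
        (fun x => μ 0 i + ∫ s in Ioc (0 : ℝ) x, ∑ j, L s j i * μ s j) (Icc 0 T) :=
      continuousOn_const.add (intervalIntegral.continuousOn_primitive (hODE.1 i))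
    have hG1 : AEMeasurable (fun x => μ 0 i + ∫ s in Ioc (0 : ℝ) x, ∑ j, L s j i * μ s j)
        (volume.restrict (Icc (0 : ℝ) T)) := hcont.aemeasurable measurableSet_Icc
    have hG := hG1.mono_measure (Measure.restrict_mono Ioc_subset_Icc_self le_rfl)
    refine hG.congr ?_
    filter_upwards [ae_restrict_mem measurableSet_Ioc] with u hu
    exact (hODE.2 u (Ioc_subset_Icc_self hu) i).symm
  have hSmeas : AEMeasurable (fun u => ENNReal.ofReal (∑ p ∈ M.E, μ u p.1 * L u p.1 p.2))
      (volume.restrict (Ioc (0 : ℝ) T)) :=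
    (Finset.aemeasurable_fun_sum M.E fun p _ =>
      (hμae p.1).mul (hL.1 p.1 p.2).aemeasurable).ennreal_ofReal
  calc SPath M (T / α) ν (fun t => μ (α * t))
      ≤ runningCost M (fun t => μ (α * t)) (fun t i j => α * L (α * t) i j) (T / α) :=
        iInf_le_of_le _ (iInf_le_of_le ⟨hRM, hODE', h0', hsimp'⟩ le_rfl)
    _ = ENNReal.ofReal α⁻¹ * ∫⁻ u in Ioc (0 : ℝ) T, ENNReal.ofReal (∑ p ∈ M.E,
          μ u p.1 * M.lam p.1 p.2 (μ u) *
            tauStar (α * L u p.1 p.2 / M.lam p.1 p.2 (μ u) - 1)) := by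
        unfold runningCost
        exact lintegral_Ioc_scale hα T (fun u => ENNReal.ofReal (∑ p ∈ M.E,
          μ u p.1 * M.lam p.1 p.2 (μ u) *
            tauStar (α * L u p.1 p.2 / M.lam p.1 p.2 (μ u) - 1)))
    _ = ∫⁻ u in Ioc (0 : ℝ) T, ENNReal.ofReal (α⁻¹ * ∑ p ∈ M.E,
          μ u p.1 * M.lam p.1 p.2 (μ u) *
            tauStar (α * L u p.1 p.2 / M.lam p.1 p.2 (μ u) - 1)) := by
        rw [← lintegral_const_mul' _ _ ENNReal.ofReal_ne_top]
        exact lintegral_congr fun u => (ENNReal.ofReal_mul (inv_nonneg.2 hα.le)).symm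
    _ ≤ ∫⁻ u in Ioc (0 : ℝ) T, (ENNReal.ofReal (∑ p ∈ M.E,
          μ u p.1 * M.lam p.1 p.2 (μ u) *
            tauStar (L u p.1 p.2 / M.lam p.1 p.2 (μ u) - 1)) +
          (ENNReal.ofReal |Real.log α| *
              ENNReal.ofReal (∑ p ∈ M.E, μ u p.1 * L u p.1 p.2) +
            ENNReal.ofReal (|1 - α| / α * M.Cb * r))) := by
        refine lintegral_mono_ae ?_
        filter_upwards [ae_restrict_mem measurableSet_Ioc] with u hu
        have hu' : μ u ∈ stdSimplex ℝ (Fin r) := hsimp u (Ioc_subset_Icc_self hu)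
        rcases Finset.eq_empty_or_nonempty M.E with hE | hE
        · simp [hE]
        · obtain ⟨p₀, hp₀⟩ := hE
          have hμ0simp : μ 0 ∈ stdSimplex ℝ (Fin r) := hsimp 0 ⟨le_refl _, hT.le⟩
          have hCb : 0 < M.Cb := lt_of_lt_of_le M.c_pos
            ((M.lam_lower p₀ hp₀ _ hμ0simp).trans (M.lam_upper p₀ hp₀ _ hμ0simp))
          have hμnn : ∀ i, 0 ≤ μ u i := hu'.1
          have hlam : ∀ p ∈ M.E, 0 < M.lam p.1 p.2 (μ u) := fun p hp =>
            lt_of_lt_of_le M.c_pos (M.lam_lower p hp _ hu')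
          have hLnn : ∀ p ∈ M.E, 0 ≤ L u p.1 p.2 := by
            intro p hp
            have hpp : (p.1, p.2) ∈ M.E := by simpa using hp
            refine hL.2.1 u p.1 p.2 fun h => ?_
            rw [h] at hpp
            exact M.no_diag p.2 hpp
          have hid : α⁻¹ * (∑ p ∈ M.E, μ u p.1 * M.lam p.1 p.2 (μ u) *
                tauStar (α * L u p.1 p.2 / M.lam p.1 p.2 (μ u) - 1))
              = (∑ p ∈ M.E, μ u p.1 * M.lam p.1 p.2 (μ u) *
                  tauStar (L u p.1 p.2 / M.lam p.1 p.2 (μ u) - 1))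
                + Real.log α * (∑ p ∈ M.E, μ u p.1 * L u p.1 p.2)
                + (α⁻¹ - 1) * (∑ p ∈ M.E, μ u p.1 * M.lam p.1 p.2 (μ u)) := by
            simp only [Finset.mul_sum, ← Finset.sum_add_distrib]
            refine Finset.sum_congr rfl fun p hp => ?_
            rw [edge_scale hα (hlam p hp) (hLnn p hp)]
            ring
          have hSnn : 0 ≤ ∑ p ∈ M.E, μ u p.1 * L u p.1 p.2 :=
            Finset.sum_nonneg fun p hp => mul_nonneg (hμnn p.1) (hLnn p hp)
          have hWnn : 0 ≤ ∑ p ∈ M.E, μ u p.1 * M.lam p.1 p.2 (μ u) :=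
            Finset.sum_nonneg fun p hp => mul_nonneg (hμnn p.1) (hlam p hp).le
          have hWle : (∑ p ∈ M.E, μ u p.1 * M.lam p.1 p.2 (μ u)) ≤ M.Cb * r := by
            calc ∑ p ∈ M.E, μ u p.1 * M.lam p.1 p.2 (μ u)
                ≤ ∑ p ∈ M.E, M.Cb * μ u p.1 := Finset.sum_le_sum fun p hp => by
                  rw [mul_comm M.Cb]
                  exact mul_le_mul_of_nonneg_left (M.lam_upper p hp _ hu') (hμnn p.1)
              _ ≤ ∑ p : Fin r × Fin r, M.Cb * μ u p.1 :=
                  Finset.sum_le_sum_of_subset_of_nonneg (Finset.subset_univ _)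
                    (fun p _ _ => mul_nonneg hCb.le (hμnn p.1))
              _ = M.Cb * r := by
                  rw [← Finset.mul_sum]
                  congr 1
                  rw [← Finset.univ_product_univ, Finset.sum_product]
                  simp only [Finset.sum_const, Finset.card_univ, Fintype.card_fin,
                    nsmul_eq_mul]
                  rw [← Finset.mul_sum, hu'.2, mul_one]
          have hreal : α⁻¹ * (∑ p ∈ M.E, μ u p.1 * M.lam p.1 p.2 (μ u) *
                tauStar (α * L u p.1 p.2 / M.lam p.1 p.2 (μ u) - 1))
              ≤ (∑ p ∈ M.E, μ u p.1 * M.lam p.1 p.2 (μ u) *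
                  tauStar (L u p.1 p.2 / M.lam p.1 p.2 (μ u) - 1))
                + |Real.log α| * (∑ p ∈ M.E, μ u p.1 * L u p.1 p.2)
                + |1 - α| / α * M.Cb * r := by
            rw [hid]
            have h1 : Real.log α * (∑ p ∈ M.E, μ u p.1 * L u p.1 p.2)
                ≤ |Real.log α| * (∑ p ∈ M.E, μ u p.1 * L u p.1 p.2) :=
              mul_le_mul_of_nonneg_right (le_abs_self _) hSnn
            have ha : α⁻¹ - 1 ≤ |1 - α| / α := by
              have hae : α⁻¹ - 1 = (1 - α) / α := by field_simp
              rw [hae]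
              gcongr
              exact le_abs_self _
            have h2 : (α⁻¹ - 1) * (∑ p ∈ M.E, μ u p.1 * M.lam p.1 p.2 (μ u))
                ≤ |1 - α| / α * M.Cb * r := by
              calc (α⁻¹ - 1) * (∑ p ∈ M.E, μ u p.1 * M.lam p.1 p.2 (μ u))
                  ≤ |1 - α| / α * (∑ p ∈ M.E, μ u p.1 * M.lam p.1 p.2 (μ u)) :=
                    mul_le_mul_of_nonneg_right ha hWnn
                _ ≤ |1 - α| / α * (M.Cb * r) := mul_le_mul_of_nonneg_left hWle
                    (div_nonneg (abs_nonneg _) hα.le)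
                _ = |1 - α| / α * M.Cb * r := by ring
            linarith
          calc ENNReal.ofReal (α⁻¹ * (∑ p ∈ M.E, μ u p.1 * M.lam p.1 p.2 (μ u) *
                tauStar (α * L u p.1 p.2 / M.lam p.1 p.2 (μ u) - 1)))
              ≤ ENNReal.ofReal ((∑ p ∈ M.E, μ u p.1 * M.lam p.1 p.2 (μ u) *
                    tauStar (L u p.1 p.2 / M.lam p.1 p.2 (μ u) - 1))
                  + |Real.log α| * (∑ p ∈ M.E, μ u p.1 * L u p.1 p.2)
                  + |1 - α| / α * M.Cb * r) := ENNReal.ofReal_le_ofReal hreal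
            _ ≤ ENNReal.ofReal ((∑ p ∈ M.E, μ u p.1 * M.lam p.1 p.2 (μ u) *
                    tauStar (L u p.1 p.2 / M.lam p.1 p.2 (μ u) - 1))
                  + |Real.log α| * (∑ p ∈ M.E, μ u p.1 * L u p.1 p.2))
                + ENNReal.ofReal (|1 - α| / α * M.Cb * r) := ENNReal.ofReal_add_le
            _ ≤ ENNReal.ofReal (∑ p ∈ M.E, μ u p.1 * M.lam p.1 p.2 (μ u) *
                    tauStar (L u p.1 p.2 / M.lam p.1 p.2 (μ u) - 1))
                + ENNReal.ofReal (|Real.log α| * (∑ p ∈ M.E, μ u p.1 * L u p.1 p.2))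
                + ENNReal.ofReal (|1 - α| / α * M.Cb * r) :=
                add_le_add_left ENNReal.ofReal_add_le _
            _ = _ := by
                rw [ENNReal.ofReal_mul (abs_nonneg _), add_assoc]
    _ = (∫⁻ u in Ioc (0 : ℝ) T, ENNReal.ofReal (∑ p ∈ M.E,
          μ u p.1 * M.lam p.1 p.2 (μ u) *
            tauStar (L u p.1 p.2 / M.lam p.1 p.2 (μ u) - 1)))
        + (ENNReal.ofReal |Real.log α| *
            (∫⁻ u in Ioc (0 : ℝ) T, ENNReal.ofReal (∑ p ∈ M.E, μ u p.1 * L u p.1 p.2))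
          + ENNReal.ofReal (|1 - α| / α * M.Cb * r) * ENNReal.ofReal T) := by
        rw [lintegral_add_right' _ ((hSmeas.const_mul _).add_const _)]
        congr 1
        rw [lintegral_add_right' _ aemeasurable_const]
        congr 1
        · exact lintegral_const_mul' _ _ ENNReal.ofReal_ne_top
        · rw [setLIntegral_const, Real.volume_Ioc, sub_zero]
    _ = runningCost M μ L T +
        ENNReal.ofReal |Real.log α| *
          (∫⁻ t in Ioc (0 : ℝ) T, ENNReal.ofReal (∑ p ∈ M.E, μ t p.1 * L t p.1 p.2)) +
        ENNReal.ofReal (|1 - α| / α * M.Cb * r * T) := by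
        rw [ENNReal.ofReal_mul' hT.le, ← add_assoc]
        rfl
end

section
/- Under assumptions (A1)–(A3), for every ν ∈ M_1(Z) the equivalence class { ξ ∈ M_1(Z) : V(ξ|ν) = V(ν|ξ) = 0 } is a closed (hence compact) subset of M_1(Z). -/
open MeasureTheory Set ENNReal Filter

noncomputable section Aux
namespace Stmt8
open Relation

variable {r : ℕ}

/-- Helper predicate: `β` is reachable from `α` with cost at most `ε`. -/
def Reach (M : MeanFieldModel r) (α β : Fin r → ℝ) (ε : ℝ) : Prop :=
  ∃ T : ℝ, 0 < T ∧ ∃ μ L, IsRateMatrix M L ∧ SolvesODE L μ T ∧ μ 0 = α ∧ μ T = β ∧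
    (∀ t ∈ Icc (0:ℝ) T, μ t ∈ stdSimplex ℝ (Fin r)) ∧
    runningCost M μ L T ≤ ENNReal.ofReal ε

lemma quasipotential_le_of_reach {M : MeanFieldModel r} {α β : Fin r → ℝ} {ε : ℝ}
    (h : Reach M α β ε) : quasipotential M α β ≤ ENNReal.ofReal ε := by
  obtain ⟨T, hT, μ, L, hL, hode, h0, hTend, hsimplex, hcost⟩ := h
  calc quasipotential M α β ≤ SEnd M T α β := iInf₂_le T hT
    _ ≤ SPath M T α μ := iInf₂_le μ ⟨h0, hTend⟩
    _ ≤ runningCost M μ L T := iInf₂_le L ⟨hL, hode, h0, hsimplex⟩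
    _ ≤ _ := hcost

lemma reach_of_quasipotential_zero {M : MeanFieldModel r} {α β : Fin r → ℝ}
    (h : quasipotential M α β = 0) {ε : ℝ} (hε : 0 < ε) : Reach M α β ε := by
  have hlt : quasipotential M α β < ENNReal.ofReal ε := by
    rw [h]; exact ENNReal.ofReal_pos.mpr hε
  rw [quasipotential] at hlt
  obtain ⟨T, hT⟩ := iInf_lt_iff.mp hlt
  obtain ⟨hT0, hT'⟩ := iInf_lt_iff.mp hT
  rw [SEnd] at hT'
  obtain ⟨μ, hμ⟩ := iInf_lt_iff.mp hT'
  obtain ⟨⟨h0, hTend⟩, hμ'⟩ := iInf_lt_iff.mp hμ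
  rw [SPath] at hμ'
  obtain ⟨L, hL⟩ := iInf_lt_iff.mp hμ'
  obtain ⟨⟨hrm, hode, h0', hsimp⟩, hc⟩ := iInf_lt_iff.mp hL
  exact ⟨T, hT0, μ, L, hrm, hode, h0, hTend, hsimp, hc.le⟩

lemma quasipotential_eq_zero_of_forall_reach {M : MeanFieldModel r} {α β : Fin r → ℝ}
    (h : ∀ ε : ℝ, 0 < ε → Reach M α β ε) : quasipotential M α β = 0 := by
  refine le_antisymm ?_ zero_le
  refine ENNReal.le_of_forall_pos_le_add fun ε hε _ => ?_
  simpa using (quasipotential_le_of_reach (h ε hε)).trans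
    (by simp [ENNReal.ofReal_coe_nnreal])

lemma simplex_nonneg {α : Fin r → ℝ} (hα : α ∈ stdSimplex ℝ (Fin r)) (i : Fin r) : 0 ≤ α i := hα.1 i

lemma simplex_le_one {α : Fin r → ℝ} (hα : α ∈ stdSimplex ℝ (Fin r)) (i : Fin r) : α i ≤ 1 := by
  have := Finset.single_le_sum (f := α) (fun j _ => hα.1 j) (Finset.mem_univ i)
  rw [hα.2] at this; exact this

/-- uniform bound on a single cost summand -/
lemma term_le {M : MeanFieldModel r} {α : Fin r → ℝ} (hα : α ∈ stdSimplex ℝ (Fin r))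
    {p : Fin r × Fin r} (hp : p ∈ M.E) {u : ℝ} (hu : tauStar u ≤ 1) (hu0 : 0 ≤ tauStar u) :
    α p.1 * M.lam p.1 p.2 α * tauStar u ≤ max M.Cb 0 := by
  have h1 : 0 ≤ α p.1 := hα.1 p.1
  have h2 : α p.1 ≤ 1 := simplex_le_one hα p.1
  have h3 : M.c ≤ M.lam p.1 p.2 α := M.lam_lower p hp α hα
  have h4 : M.lam p.1 p.2 α ≤ M.Cb := M.lam_upper p hp α hα
  have h5 : 0 ≤ M.lam p.1 p.2 α := le_trans M.c_pos.le h3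
  calc α p.1 * M.lam p.1 p.2 α * tauStar u ≤ 1 * M.Cb * 1 := by
        apply mul_le_mul (mul_le_mul h2 h4 h5 zero_le_one) hu (by positivity)
        nlinarith
    _ ≤ max M.Cb 0 := by simp [le_max_iff]

lemma tauStar_neg_one : tauStar (-1) = 1 := by simp [tauStar]

lemma tauStar_nonneg {u : ℝ} (hu : -1 ≤ u) : 0 ≤ tauStar u := by
  rcases eq_or_lt_of_le hu with h | h
  · simp [← h, tauStar]
  · have h1 : 0 < u + 1 := by linarith
    have h2 := Real.log_le_sub_one_of_pos (x := (u + 1)⁻¹) (by positivity)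
    rw [Real.log_inv] at h2
    have h3 : 1 - (u + 1)⁻¹ ≤ Real.log (u + 1) := by linarith
    have h4 : (u + 1) * (1 - (u + 1)⁻¹) ≤ (u + 1) * Real.log (u + 1) :=
      mul_le_mul_of_nonneg_left h3 h1.le
    have h5 : (u + 1) * (1 - (u + 1)⁻¹) = u := by field_simp; ring
    unfold tauStar; linarith

end Stmt8
end Aux
noncomputable section Aux2
namespace Stmt8
variable {r : ℕ}

lemma sum_cost_le {M : MeanFieldModel r} {α : Fin r → ℝ} (hα : α ∈ stdSimplex ℝ (Fin r))
    (f : Fin r × Fin r → ℝ) (hf : ∀ p ∈ M.E, -1 ≤ f p ∧ tauStar (f p) ≤ 1) :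
    ∑ p ∈ M.E, α p.1 * M.lam p.1 p.2 α * tauStar (f p) ≤ (r * r) * max M.Cb 0 := by
  calc ∑ p ∈ M.E, α p.1 * M.lam p.1 p.2 α * tauStar (f p)
      ≤ ∑ _p ∈ M.E, max M.Cb 0 := by
        refine Finset.sum_le_sum fun p hp => term_le hα hp (hf p hp).2 (tauStar_nonneg (hf p hp).1)
    _ = M.E.card * max M.Cb 0 := by rw [Finset.sum_const, nsmul_eq_mul]
    _ ≤ (r * r) * max M.Cb 0 := by
        have : M.E.card ≤ r * r := by
          have := Finset.card_le_univ M.E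
          simpa [Finset.card_univ] using this
        exact mul_le_mul_of_nonneg_right (by exact_mod_cast this) (le_max_right _ _)

lemma reach_refl {M : MeanFieldModel r} {α : Fin r → ℝ} (hα : α ∈ stdSimplex ℝ (Fin r))
    {ε : ℝ} (hε : 0 < ε) : Reach M α α ε := by
  set D : ℝ := (r * r) * max M.Cb 0 + 1 with hD
  have hD0 : 0 < D := by positivity
  refine ⟨ε / D, by positivity, (fun _ => α), (fun _ _ _ => 0), ?_, ?_, rfl, rfl, ?_, ?_⟩
  · exact ⟨fun i j => measurable_const, fun t i j _ => le_refl 0,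
      fun t i j _ _ => rfl, fun t i => by simp⟩
  · constructor
    · intro i; simp [integrableOn_const]
    · intro t ht i; simp
  · intro t _; exact hα
  · have hpt : ∀ t : ℝ, ENNReal.ofReal (∑ p ∈ M.E,
        α p.1 * M.lam p.1 p.2 α * tauStar ((0:ℝ) / M.lam p.1 p.2 α - 1)) ≤
        ENNReal.ofReal D := by
      intro t
      apply ENNReal.ofReal_le_ofReal
      have hs := sum_cost_le (M := M) hα (fun p => (0:ℝ) / M.lam p.1 p.2 α - 1)
        (fun p hp => by simp only [zero_div]
                        constructor
                        · norm_num
                        · norm_num [tauStar_neg_one])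
      linarith
    calc runningCost M (fun _ => α) (fun _ _ _ => 0) (ε / D)
        ≤ ∫⁻ _t in Ioc (0:ℝ) (ε / D), ENNReal.ofReal D := by
          exact lintegral_mono fun t => hpt t
      _ = ENNReal.ofReal D * ENNReal.ofReal (ε / D) := by
          rw [setLIntegral_const, Real.volume_Ioc]; norm_num
      _ ≤ ENNReal.ofReal ε := by
          rw [← ENNReal.ofReal_mul hD0.le]
          apply ENNReal.ofReal_le_ofReal
          rw [mul_div_cancel₀ _ hD0.ne']

end Stmt8
end Aux2
noncomputable section Aux3
namespace Stmt8
variable {r : ℕ}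

lemma reach_trans {M : MeanFieldModel r} {α β γ : Fin r → ℝ} {ε₁ ε₂ : ℝ}
    (hε₁ : 0 ≤ ε₁) (hε₂ : 0 ≤ ε₂)
    (h₁ : Reach M α β ε₁) (h₂ : Reach M β γ ε₂) : Reach M α γ (ε₁ + ε₂) := by
  obtain ⟨T₁, hT₁, μ₁, L₁, hrm₁, hode₁, h01, hT1end, hsimp₁, hc₁⟩ := h₁
  obtain ⟨T₂, hT₂, μ₂, L₂, hrm₂, hode₂, h02, hT2end, hsimp₂, hc₂⟩ := h₂
  set μ : ℝ → Fin r → ℝ := fun t => if t ≤ T₁ then μ₁ t else μ₂ (t - T₁) with hμdef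
  set L : ℝ → Fin r → Fin r → ℝ := fun t => if t ≤ T₁ then L₁ t else L₂ (t - T₁) with hLdef
  -- the combined drift
  have hF : ∀ t i, (∑ j, L t j i * μ t j) =
      if t ≤ T₁ then (∑ j, L₁ t j i * μ₁ t j) else (∑ j, L₂ (t - T₁) j i * μ₂ (t - T₁) j) := by
    intro t i
    by_cases ht : t ≤ T₁ <;> simp [hμdef, hLdef, ht]
  -- integrability of the second piece after shifting
  have hint₂ : ∀ i, IntegrableOn (fun t => ∑ j, L₂ (t - T₁) j i * μ₂ (t - T₁) j)
      (Ioc T₁ (T₁ + T₂)) := by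
    intro i
    have h1 : IntervalIntegrable (fun t => ∑ j, L₂ t j i * μ₂ t j) volume 0 T₂ :=
      (intervalIntegrable_iff_integrableOn_Ioc_of_le hT₂.le).mpr
        (((hode₂.1 i)).mono_set Ioc_subset_Icc_self)
    have h2 := h1.comp_sub_right T₁
    rw [zero_add] at h2
    have h3 := (intervalIntegrable_iff_integrableOn_Ioc_of_le (by linarith)).mp h2
    simpa [add_comm] using h3
  have hint₁ : ∀ i, IntegrableOn (fun t => ∑ j, L₁ t j i * μ₁ t j) (Icc 0 T₁) := hode₁.1
  -- integrability of the combined drift on pieces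
  have hintA : ∀ i, IntegrableOn (fun t => ∑ j, L t j i * μ t j) (Icc 0 T₁) := by
    intro i
    refine ((hint₁ i).congr_fun (fun t ht => ?_) measurableSet_Icc)
    rw [hF t i, if_pos ht.2]
  have hintB : ∀ i, IntegrableOn (fun t => ∑ j, L t j i * μ t j) (Ioc T₁ (T₁ + T₂)) := by
    intro i
    refine ((hint₂ i).congr_fun (fun t ht => ?_) measurableSet_Ioc)
    rw [hF t i, if_neg (not_le.mpr ht.1)]
  refine ⟨T₁ + T₂, by linarith, μ, L, ?_, ?_, ?_, ?_, ?_, ?_⟩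
  · -- IsRateMatrix
    refine ⟨fun i j => ?_, fun t i j hij => ?_, fun t i j hij hE => ?_, fun t i => ?_⟩
    · have hm : Measurable fun t => if t ∈ Iic T₁ then L₁ t i j else L₂ (t - T₁) i j :=
        Measurable.ite measurableSet_Iic (hrm₁.1 i j)
          ((hrm₂.1 i j).comp (measurable_id.sub measurable_const))
      have heq : (fun t => L t i j) = fun t => if t ∈ Iic T₁ then L₁ t i j else L₂ (t - T₁) i j := by
        funext t; by_cases h : t ≤ T₁ <;> simp [hLdef, h]
      rw [heq]; exact hm
    · by_cases ht : t ≤ T₁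
      · have hL1 : L t i j = L₁ t i j := by simp [hLdef, ht]
        rw [hL1]; exact hrm₁.2.1 t i j hij
      · have hL2 : L t i j = L₂ (t - T₁) i j := by simp [hLdef, ht]
        rw [hL2]; exact hrm₂.2.1 (t - T₁) i j hij
    · by_cases ht : t ≤ T₁
      · have hL1 : L t i j = L₁ t i j := by simp [hLdef, ht]
        rw [hL1]; exact hrm₁.2.2.1 t i j hij hE
      · have hL2 : L t i j = L₂ (t - T₁) i j := by simp [hLdef, ht]
        rw [hL2]; exact hrm₂.2.2.1 (t - T₁) i j hij hE
    · by_cases ht : t ≤ T₁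
      · have hL1 : ∀ a b, L t a b = L₁ t a b := by intro a b; simp [hLdef, ht]
        simp only [hL1]; exact hrm₁.2.2.2 t i
      · have hL2 : ∀ a b, L t a b = L₂ (t - T₁) a b := by intro a b; simp [hLdef, ht]
        simp only [hL2]; exact hrm₂.2.2.2 (t - T₁) i
  · -- SolvesODE
    constructor
    · intro i
      have : Icc (0:ℝ) (T₁ + T₂) ⊆ Icc 0 T₁ ∪ Ioc T₁ (T₁ + T₂) := by
        intro x hx
        by_cases hxT : x ≤ T₁
        · exact Or.inl ⟨hx.1, hxT⟩
        · exact Or.inr ⟨not_le.mp hxT, hx.2⟩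
      exact ((hintA i).union (hintB i)).mono_set this
    · intro t ht i
      have hμ0 : μ 0 i = μ₁ 0 i := by simp [hμdef, hT₁.le]
      by_cases htT : t ≤ T₁
      · have hcg : ∫ s in Ioc (0:ℝ) t, ∑ j, L s j i * μ s j
            = ∫ s in Ioc (0:ℝ) t, ∑ j, L₁ s j i * μ₁ s j := by
          refine setIntegral_congr_fun measurableSet_Ioc (fun s hs => ?_)
          rw [hF s i, if_pos (le_trans hs.2 htT)]
        have hμt : μ t i = μ₁ t i := by simp [hμdef, htT]
        rw [hμt, hμ0, hcg]
        exact hode₁.2 t ⟨ht.1, htT⟩ i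
      · have hTt : T₁ < t := not_le.mp htT
        have key : ∫ s in Ioc (0:ℝ) t, ∑ j, L s j i * μ s j
            = (β i - α i) + (μ₂ (t - T₁) i - β i) := by
          have hsplit : Ioc (0:ℝ) t = Ioc 0 T₁ ∪ Ioc T₁ t :=
            (Ioc_union_Ioc_eq_Ioc hT₁.le hTt.le).symm
          rw [hsplit, setIntegral_union (Ioc_disjoint_Ioc_of_le le_rfl) measurableSet_Ioc
            ((hintA i).mono_set Ioc_subset_Icc_self)
            ((hintB i).mono_set (Ioc_subset_Ioc le_rfl (by linarith [ht.2])))]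
          congr 1
          · have e1 : ∫ s in Ioc (0:ℝ) T₁, ∑ j, L s j i * μ s j
                = ∫ s in Ioc (0:ℝ) T₁, ∑ j, L₁ s j i * μ₁ s j := by
              refine setIntegral_congr_fun measurableSet_Ioc (fun s hs => ?_)
              rw [hF s i, if_pos hs.2]
            have e2 := hode₁.2 T₁ ⟨hT₁.le, le_rfl⟩ i
            rw [e1, ← hT1end, ← h01]
            linarith [e2]
          · have e1 : ∫ s in Ioc T₁ t, ∑ j, L s j i * μ s j
                = ∫ s in Ioc T₁ t, (fun u => ∑ j, L₂ u j i * μ₂ u j) (s - T₁) := by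
              refine setIntegral_congr_fun measurableSet_Ioc (fun s hs => ?_)
              rw [hF s i, if_neg (not_le.mpr hs.1)]
            have e2 : ∫ s in Ioc T₁ t, (fun u => ∑ j, L₂ u j i * μ₂ u j) (s - T₁)
                = ∫ s in Ioc (0:ℝ) (t - T₁), ∑ j, L₂ s j i * μ₂ s j := by
              have h := intervalIntegral.integral_comp_sub_right (a := T₁) (b := t)
                  (fun u => ∑ j, L₂ u j i * μ₂ u j) T₁
              rw [intervalIntegral.integral_of_le hTt.le, sub_self,
                  intervalIntegral.integral_of_le (by linarith : (0:ℝ) ≤ t - T₁)] at h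
              exact h
            have e3 := hode₂.2 (t - T₁) ⟨by linarith, by linarith [ht.2]⟩ i
            rw [e1, e2, ← h02]
            linarith [e3]
        have hμt : μ t i = μ₂ (t - T₁) i := by simp [hμdef, htT]
        rw [hμt, hμ0, key, h01]
        ring
  · show μ 0 = α
    rw [hμdef]; simp [le_of_lt hT₁, h01]
  · show μ (T₁ + T₂) = γ
    rw [hμdef]
    simp only [add_le_iff_nonpos_right]
    rw [if_neg (by linarith), add_sub_cancel_left, hT2end]
  · intro t ht
    by_cases htT : t ≤ T₁
    · simpa [hμdef, htT] using hsimp₁ t ⟨ht.1, htT⟩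
    · have := hsimp₂ (t - T₁) ⟨by linarith [not_le.mp htT], by linarith [ht.2]⟩
      simpa [hμdef, htT] using this
  · -- cost
    have hsplit : Ioc (0:ℝ) (T₁ + T₂) = Ioc 0 T₁ ∪ Ioc T₁ (T₁ + T₂) :=
      (Ioc_union_Ioc_eq_Ioc hT₁.le (by linarith)).symm
    rw [runningCost, hsplit, lintegral_union measurableSet_Ioc (Ioc_disjoint_Ioc_of_le le_rfl)]
    have e1 : ∫⁻ t in Ioc (0:ℝ) T₁, ENNReal.ofReal (∑ p ∈ M.E,
          μ t p.1 * M.lam p.1 p.2 (μ t) * tauStar (L t p.1 p.2 / M.lam p.1 p.2 (μ t) - 1))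
        = runningCost M μ₁ L₁ T₁ := by
      rw [runningCost]
      refine setLIntegral_congr_fun measurableSet_Ioc (fun s hs => ?_)
      simp [hμdef, hLdef, hs.2]
    have e2 : ∫⁻ t in Ioc T₁ (T₁ + T₂), ENNReal.ofReal (∑ p ∈ M.E,
          μ t p.1 * M.lam p.1 p.2 (μ t) * tauStar (L t p.1 p.2 / M.lam p.1 p.2 (μ t) - 1))
        = runningCost M μ₂ L₂ T₂ := by
      rw [runningCost]
      have hemb : MeasurableEmbedding (fun x : ℝ => x - T₁) :=
        (MeasurableEquiv.subRight T₁).measurableEmbedding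
      have hmp : MeasurePreserving (fun x : ℝ => x - T₁) volume volume :=
        measurePreserving_sub_right volume T₁
      have hpre : (fun x : ℝ => x - T₁) ⁻¹' (Ioc 0 T₂) = Ioc T₁ (T₁ + T₂) := by
        ext x; simp only [mem_preimage, mem_Ioc]; constructor <;> intro h <;>
          exact ⟨by linarith [h.1], by linarith [h.2]⟩
      have e2a : ∫⁻ t in Ioc T₁ (T₁ + T₂), ENNReal.ofReal (∑ p ∈ M.E,
            μ t p.1 * M.lam p.1 p.2 (μ t) * tauStar (L t p.1 p.2 / M.lam p.1 p.2 (μ t) - 1))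
          = ∫⁻ t in Ioc T₁ (T₁ + T₂), (fun u => ENNReal.ofReal (∑ p ∈ M.E,
            μ₂ u p.1 * M.lam p.1 p.2 (μ₂ u) * tauStar (L₂ u p.1 p.2 / M.lam p.1 p.2 (μ₂ u) - 1)))
            (t - T₁) := by
        refine setLIntegral_congr_fun measurableSet_Ioc
          (fun s hs => ?_)
        simp [hμdef, hLdef, not_le.mpr hs.1]
      have e2b := hmp.setLIntegral_comp_preimage_emb hemb
        (fun u => ENNReal.ofReal (∑ p ∈ M.E,
          μ₂ u p.1 * M.lam p.1 p.2 (μ₂ u) * tauStar (L₂ u p.1 p.2 / M.lam p.1 p.2 (μ₂ u) - 1)))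
        (Ioc 0 T₂)
      rw [hpre] at e2b
      exact e2a.trans e2b
    rw [e1, e2]
    exact le_trans (add_le_add hc₁ hc₂) (by rw [← ENNReal.ofReal_add hε₁ hε₂])

end Stmt8
end Aux3
noncomputable section Aux4
namespace Stmt8
variable {r : ℕ}

lemma tauStar_sub_one (x : ℝ) : tauStar (x - 1) = x * Real.log x - x + 1 := by
  unfold tauStar; rw [sub_add_cancel]; ring

lemma ae_ne_real (q : ℝ) : ∀ᵐ s : ℝ, s ≠ q := by
  simp [MeasureTheory.ae_iff, Set.setOf_eq_eq_singleton, measure_singleton]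

/-- Moving mass `m` from `a` to `b` along one edge, in time `m`. -/
lemma edge_move {M : MeanFieldModel r} {a b : Fin r} (hab : (a, b) ∈ M.E)
    {α : Fin r → ℝ} (hα : α ∈ stdSimplex ℝ (Fin r)) {m : ℝ} (hm : 0 < m) (hma : m ≤ α a) :
    Reach M α (fun i => α i + m * (if i = b then 1 else 0) - m * (if i = a then 1 else 0))
      (4 * M.c ^ (-(1:ℝ)/2) * m ^ ((1:ℝ)/2) + ((r*r+1 : ℝ) * max M.Cb 0) * m) := by
  have hab' : a ≠ b := fun h => M.no_diag a (by rw [h] at hab ⊢; exact hab)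
  set μ : ℝ → Fin r → ℝ :=
    fun t i => α i + t * (if i = b then 1 else 0) - t * (if i = a then 1 else 0) with hμdef
  set ℓ : ℝ → ℝ := fun t => if α a - t ≤ 0 then 0 else 1 / (α a - t) with hℓdef
  set L : ℝ → Fin r → Fin r → ℝ :=
    fun t i j => if i = a ∧ j = b then ℓ t else if i = a ∧ j = a then -(ℓ t) else 0 with hLdef
  have hℓ_eq0 : ∀ t, α a - t ≤ 0 → ℓ t = 0 := fun t h => if_pos h
  have hℓ_eq1 : ∀ t, ¬(α a - t ≤ 0) → ℓ t = 1 / (α a - t) := fun t h => if_neg h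
  have hℓ_nonneg : ∀ t, 0 ≤ ℓ t := by
    intro t
    by_cases h : α a - t ≤ 0
    · rw [hℓ_eq0 t h]
    · have hpos := not_le.mp h
      rw [hℓ_eq1 t h]; positivity
  have hμa : ∀ t, μ t a = α a - t := by
    intro t; simp [hμdef, hab']
  have hμα : ∀ t, ∀ i : Fin r, i ≠ a → i ≠ b → μ t i = α i := by
    intro t i hia hib; simp [hμdef, hia, hib]
  have hμb : ∀ t, μ t b = α b + t := by
    intro t; simp [hμdef, Ne.symm hab']
  have hαa1 : α a ≤ 1 := simplex_le_one hα a
  -- the drift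
  have hdrift : ∀ (s : ℝ) (i : Fin r), (∑ j, L s j i * μ s j) =
      (if s < α a then (1:ℝ) else 0) *
        ((if i = b then 1 else 0) - (if i = a then 1 else 0)) := by
    intro s i
    rw [Finset.sum_eq_single a]
    · have hLa : L s a i = if i = b then ℓ s else if i = a then -(ℓ s) else 0 := by
        by_cases hib : i = b
        · simp [hLdef, hib]
        · by_cases hia : i = a
          · simp [hLdef, hia, hib]
          · simp [hLdef, hia, hib]
      have hμas : μ s a = α a - s := hμa s
      by_cases hib : i = b
      · have hia : i ≠ a := by rw [hib]; exact Ne.symm hab'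
        rw [hLa, if_pos hib, hμas]
        by_cases h : α a - s ≤ 0
        · rw [hℓ_eq0 s h, if_neg (by linarith : ¬ s < α a), if_pos hib, if_neg hia]
          ring
        · have h' : α a - s ≠ 0 := fun hq => h (le_of_eq hq)
          rw [hℓ_eq1 s h, if_pos (by linarith : s < α a), if_pos hib, if_neg hia]
          field_simp; norm_num
      · rw [hLa, if_neg hib]
        by_cases hia : i = a
        · rw [if_pos hia, hμas]
          by_cases h : α a - s ≤ 0
          · rw [hℓ_eq0 s h, if_neg (by linarith : ¬ s < α a), if_neg hib, if_pos hia]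
            ring
          · have h' : α a - s ≠ 0 := fun hq => h (le_of_eq hq)
            rw [hℓ_eq1 s h, if_pos (by linarith : s < α a), if_neg hib, if_pos hia]
            field_simp; norm_num
        · rw [if_neg hia, if_neg hib, if_neg hia]
          ring
    · intro j _ hja
      have hz : L s j i = 0 := by simp [hLdef, hja]
      rw [hz, zero_mul]
    · intro h; exact absurd (Finset.mem_univ a) h
  -- integrability of the drift
  have hind : IntegrableOn (fun s => if s < α a then (1:ℝ) else 0) (Icc 0 m) := by
    have he : (fun s => if s < α a then (1:ℝ) else 0) = (Iio (α a)).indicator (fun _ => 1) := by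
      funext s; simp [Set.indicator_apply]
    rw [he]
    exact (integrableOn_const measure_Icc_lt_top.ne).indicator measurableSet_Iio
  have hdint : ∀ i : Fin r, IntegrableOn (fun s => ∑ j, L s j i * μ s j) (Icc 0 m) := by
    intro i
    have h5 : IntegrableOn (fun s => (if s < α a then (1:ℝ) else 0) *
        ((if i = b then 1 else 0) - (if i = a then 1 else 0))) (Icc 0 m) := hind.mul_const _
    refine h5.congr_fun (fun s _ => ?_) measurableSet_Icc
    rw [hdrift s i]
  -- the ODE
  have hode : SolvesODE L μ m := by
    refine ⟨hdint, fun t ht i => ?_⟩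
    have hkey : ∫ s in Ioc (0:ℝ) t, (∑ j, L s j i * μ s j) =
        t * ((if i = b then 1 else 0) - (if i = a then 1 else 0)) := by
      have hcg : ∫ s in Ioc (0:ℝ) t, (∑ j, L s j i * μ s j) =
          ∫ _s in Ioc (0:ℝ) t, ((if i = b then (1:ℝ) else 0) - (if i = a then 1 else 0)) := by
        refine setIntegral_congr_ae measurableSet_Ioc ?_
        filter_upwards [ae_ne_real (α a)] with s hs hmem
        rw [hdrift s i, if_pos (lt_of_le_of_ne (le_trans hmem.2 (le_trans ht.2 hma)) hs),
          one_mul]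
      rw [hcg, setIntegral_const, Real.volume_real_Ioc_of_le ht.1, sub_zero,
        smul_eq_mul]
    rw [hkey]
    simp only [hμdef]
    ring
  -- simplex membership along the path
  have hsimp : ∀ t ∈ Icc (0:ℝ) m, μ t ∈ stdSimplex ℝ (Fin r) := by
    intro t ht
    refine ⟨fun i => ?_, ?_⟩
    · by_cases hia : i = a
      · subst hia; rw [hμa]; linarith [ht.2]
      · by_cases hib : i = b
        · rw [hib, hμb]; linarith [hα.1 b, ht.1]
        · rw [hμα t i hia hib]; exact hα.1 i
    · have hsum : ∑ i, μ t i = (∑ i, α i) + t * (∑ i, if i = b then (1:ℝ) else 0)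
          - t * (∑ i, if i = a then (1:ℝ) else 0) := by
        simp only [hμdef]
        rw [Finset.sum_sub_distrib, Finset.sum_add_distrib, Finset.mul_sum, Finset.mul_sum]
      rw [hsum, hα.2, Finset.sum_ite_eq' Finset.univ b (fun _ => (1:ℝ)),
          Finset.sum_ite_eq' Finset.univ a (fun _ => (1:ℝ))]
      simp
  refine ⟨m, hm, μ, L, ?_, hode, ?_, ?_, hsimp, ?_⟩
  · -- IsRateMatrix
    have hmeas : Measurable ℓ := by
      have h1 : Measurable fun t : ℝ => 1 / (α a - t) := by
        simp only [one_div]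
        exact (measurable_const.sub measurable_id).inv
      have h2 : MeasurableSet {t : ℝ | α a - t ≤ 0} :=
        measurableSet_le (measurable_const.sub measurable_id) measurable_const
      rw [hℓdef]
      exact Measurable.ite h2 measurable_const h1
    refine ⟨fun i j => ?_, fun t i j hij => ?_, fun t i j hij hE => ?_, fun t i => ?_⟩
    · by_cases h1 : i = a ∧ j = b
      · have he : (fun t => L t i j) = ℓ := funext fun t => if_pos h1
        rw [he]; exact hmeas
      · by_cases h2 : i = a ∧ j = a
        · have he : (fun t => L t i j) = fun t => -(ℓ t) := by
            funext t
            show (if i = a ∧ j = b then ℓ t else if i = a ∧ j = a then -ℓ t else 0) = -ℓ t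
            rw [if_neg h1, if_pos h2]
          rw [he]; exact hmeas.neg
        · have he : (fun t => L t i j) = fun _ => (0:ℝ) := by
            funext t
            show (if i = a ∧ j = b then ℓ t else if i = a ∧ j = a then -ℓ t else 0) = 0
            rw [if_neg h1, if_neg h2]
          rw [he]; exact measurable_const
    · by_cases h1 : i = a ∧ j = b
      · have he : L t i j = ℓ t := by simp [hLdef, h1.1, h1.2]
        rw [he]; exact hℓ_nonneg t
      · by_cases h2 : i = a ∧ j = a
        · exact absurd (h2.1.trans h2.2.symm) hij
        · have he : L t i j = 0 := by simp [hLdef, h1, h2]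
          rw [he]
    · by_cases h1 : i = a ∧ j = b
      · exact absurd (by rw [h1.1, h1.2]; exact hab) hE
      · by_cases h2 : i = a ∧ j = a
        · exact absurd (h2.1.trans h2.2.symm) hij
        · simp [hLdef, h1, h2]
    · by_cases hia : i = a
      · subst hia
        have hsum : (∑ j ∈ Finset.univ.filter (fun j => j ≠ i), L t i j) = ℓ t := by
          have hcg : ∀ j ∈ Finset.univ.filter (fun j => j ≠ i), L t i j
              = if j = b then ℓ t else 0 := by
            intro j hj
            have hja : j ≠ i := (Finset.mem_filter.mp hj).2
            simp [hLdef, hja]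
          rw [Finset.sum_congr rfl hcg, Finset.sum_ite_eq' _ b (fun _ => ℓ t)]
          rw [if_pos]
          simp [Ne.symm hab']
        rw [hsum]
        simp [hLdef, hab']
      · have h0 : ∀ j, L t i j = 0 := fun j => by simp [hLdef, hia]
        simp [h0]
  · funext i; simp [hμdef]
  · funext i; simp only [hμdef]
  · -- cost bound
    have hc0 : 0 < M.c := M.c_pos
    set Cb' := max M.Cb 0 with hCb'
    have hCb'0 : (0:ℝ) ≤ Cb' := le_max_right _ _
    set Kc : ℝ := (r*r+1 : ℝ) * Cb' with hKcdef
    have hKc0 : (0:ℝ) ≤ Kc := by positivity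
    set G : ℝ → ℝ := fun s => 2 * M.c ^ (-(1:ℝ)/2) * (m - s) ^ (-(1:ℝ)/2) + Kc with hGdef
    -- pointwise bound on Ioo 0 m
    have hpt : ∀ s ∈ Ioo (0:ℝ) m, (∑ p ∈ M.E, μ s p.1 * M.lam p.1 p.2 (μ s)
        * tauStar (L s p.1 p.2 / M.lam p.1 p.2 (μ s) - 1)) ≤ G s := by
      intro s hs
      have hν := hsimp s ⟨hs.1.le, hs.2.le⟩
      have hsm : 0 < α a - s := by have := hs.2; linarith
      have hms0 : (0:ℝ) < m - s := by linarith [hs.2]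
      have hℓs : ℓ s = 1 / (α a - s) := hℓ_eq1 s (by linarith)
      rw [← Finset.add_sum_erase M.E _ hab]
      have hrest : (∑ p ∈ M.E.erase (a,b), μ s p.1 * M.lam p.1 p.2 (μ s)
          * tauStar (L s p.1 p.2 / M.lam p.1 p.2 (μ s) - 1)) ≤ (r*r : ℝ) * Cb' := by
        have hterm : ∀ p ∈ M.E.erase (a,b), μ s p.1 * M.lam p.1 p.2 (μ s)
            * tauStar (L s p.1 p.2 / M.lam p.1 p.2 (μ s) - 1) ≤ Cb' := by
          intro p hp
          have hpE : p ∈ M.E := Finset.mem_of_mem_erase hp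
          have hLp : L s p.1 p.2 = 0 := by
            have hne : ¬(p.1 = a ∧ p.2 = b) := by
              intro h; exact (Finset.ne_of_mem_erase hp) (Prod.ext h.1 h.2)
            have hne2 : ¬(p.1 = a ∧ p.2 = a) := by
              intro h
              have hpaa : p = (a, a) := Prod.ext h.1 h.2
              exact M.no_diag a (by rwa [hpaa] at hpE)
            simp [hLdef, hne, hne2]
          rw [hLp, zero_div, zero_sub]
          exact term_le hν hpE (by rw [tauStar_neg_one]) (by rw [tauStar_neg_one]; norm_num)
        calc (∑ p ∈ M.E.erase (a,b), μ s p.1 * M.lam p.1 p.2 (μ s)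
              * tauStar (L s p.1 p.2 / M.lam p.1 p.2 (μ s) - 1))
            ≤ ∑ _p ∈ M.E.erase (a,b), Cb' := Finset.sum_le_sum hterm
          _ = (M.E.erase (a,b)).card * Cb' := by rw [Finset.sum_const, nsmul_eq_mul]
          _ ≤ (r*r : ℝ) * Cb' := by
              refine mul_le_mul_of_nonneg_right ?_ hCb'0
              have h3 : (M.E.erase (a,b)).card ≤ r * r :=
                le_trans (Finset.card_le_univ _) (le_of_eq (by simp))
              exact_mod_cast h3
      have hmain : μ s a * M.lam a b (μ s) * tauStar (L s a b / M.lam a b (μ s) - 1)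
          ≤ 2 * M.c ^ (-(1:ℝ)/2) * (m - s) ^ (-(1:ℝ)/2) + Cb' := by
        set lv := M.lam a b (μ s) with hlv
        have hl1 : M.c ≤ lv := M.lam_lower (a,b) hab (μ s) hν
        have hl2 : lv ≤ M.Cb := M.lam_upper (a,b) hab (μ s) hν
        have hlv0 : 0 < lv := lt_of_lt_of_le hc0 hl1
        have hLs : L s a b = ℓ s := if_pos ⟨rfl, rfl⟩
        set x := ℓ s / lv with hx
        have hx0 : 0 < x := by rw [hx, hℓs]; positivity
        have hμsa : μ s a = α a - s := hμa s
        have hprod : μ s a * lv * x = 1 := by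
          rw [hμsa, hx, hℓs]; field_simp
        have hexp : μ s a * lv * tauStar (x - 1) = Real.log x - 1 + μ s a * lv := by
          calc μ s a * lv * tauStar (x - 1)
              = (μ s a * lv * x) * Real.log x - (μ s a * lv * x) + μ s a * lv := by
                rw [tauStar_sub_one]; ring
            _ = Real.log x - 1 + μ s a * lv := by rw [hprod]; ring
        have hxle : x ≤ (M.c * (m - s))⁻¹ := by
          rw [hx, hℓs]
          have h1 : M.c * (m - s) ≤ lv * (α a - s) := by
            apply mul_le_mul hl1 (by linarith) (by linarith) hlv0.le
          have h2 : (0:ℝ) < M.c * (m - s) := by positivity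
          have h4 : (1 / (α a - s)) / lv = (lv * (α a - s))⁻¹ := by
            rw [one_div, div_eq_mul_inv, ← mul_inv, mul_comm]
          rw [h4]
          exact inv_anti₀ h2 h1
        have hlog : Real.log x ≤ 2 * M.c ^ (-(1:ℝ)/2) * (m - s) ^ (-(1:ℝ)/2) := by
          have hlg := Real.log_le_rpow_div hx0.le (by norm_num : (0:ℝ) < 1/2)
          have hx12 : x ^ ((1:ℝ)/2) ≤ ((M.c*(m-s))⁻¹) ^ ((1:ℝ)/2) :=
            Real.rpow_le_rpow hx0.le hxle (by norm_num)
          have heq : ((M.c*(m-s))⁻¹) ^ ((1:ℝ)/2) = M.c ^ (-(1:ℝ)/2) * (m-s) ^ (-(1:ℝ)/2) := by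
            have hneg : (-(1:ℝ)/2) = -((1:ℝ)/2) := by norm_num
            rw [hneg, Real.inv_rpow (by positivity), Real.mul_rpow hc0.le hms0.le, mul_inv,
              ← Real.rpow_neg hc0.le, ← Real.rpow_neg hms0.le]
          nlinarith [hx12, heq, hlg]
        have hμlv : μ s a * lv ≤ Cb' := by
          have h1 : μ s a ≤ 1 := simplex_le_one hν a
          have h2 : 0 ≤ μ s a := hν.1 a
          calc μ s a * lv ≤ 1 * M.Cb := mul_le_mul h1 hl2 hlv0.le zero_le_one
            _ ≤ Cb' := by rw [one_mul]; exact le_max_left _ _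
        rw [hLs, ← hx, hexp]
        have h9 : Real.log x - 1 + μ s a * lv ≤ Real.log x + Cb' := by linarith
        exact h9.trans (add_le_add_left hlog Cb')
      rw [hGdef, hKcdef]
      have := add_le_add hmain hrest
      linarith
    -- measurability of G
    have hGmeas : Measurable G := by
      rw [hGdef]
      exact (((measurable_const.sub measurable_id).pow measurable_const).const_mul
        _).add measurable_const
    -- integrability of G
    have hII : IntervalIntegrable (fun x : ℝ => (m - x) ^ (-(1:ℝ)/2)) volume 0 m := by
      have h1 : IntervalIntegrable (fun u : ℝ => u ^ (-(1:ℝ)/2)) volume 0 m :=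
        intervalIntegral.intervalIntegrable_rpow' (by norm_num)
      have h2 := h1.comp_sub_left m
      rw [sub_zero, sub_self] at h2
      exact h2.symm
    have hGint : IntegrableOn G (Ioo 0 m) := by
      have h3 : IntegrableOn (fun x : ℝ => (m - x) ^ (-(1:ℝ)/2)) (Ioc 0 m) :=
        (intervalIntegrable_iff_integrableOn_Ioc_of_le hm.le).mp hII
      rw [hGdef]
      exact ((h3.mono_set Ioo_subset_Ioc_self).const_mul _).add
        (integrableOn_const measure_Ioo_lt_top.ne)
    have hGnn : 0 ≤ᶠ[ae (volume.restrict (Ioo (0:ℝ) m))] G := by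
      rw [Filter.EventuallyLE, ae_restrict_iff' measurableSet_Ioo]
      refine Filter.Eventually.of_forall fun s hs => ?_
      rw [hGdef]
      have h1 : (0:ℝ) ≤ (m - s) ^ (-(1:ℝ)/2) := Real.rpow_nonneg (by linarith [hs.2]) _
      have h2 : (0:ℝ) ≤ M.c ^ (-(1:ℝ)/2) := Real.rpow_nonneg hc0.le _
      simp only [Pi.zero_apply]
      positivity
    -- the integral of G
    have hGval : ∫ s in Ioo (0:ℝ) m, G s
        = 2 * M.c ^ (-(1:ℝ)/2) * (2 * m ^ ((1:ℝ)/2)) + Kc * m := by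
      rw [setIntegral_congr_set Ioo_ae_eq_Ioc, ← intervalIntegral.integral_of_le hm.le]
      rw [hGdef]
      rw [intervalIntegral.integral_add (hII.const_mul _) intervalIntegrable_const]
      rw [intervalIntegral.integral_const_mul]
      have hcs : ∫ x in (0:ℝ)..m, (m - x) ^ (-(1:ℝ)/2) = 2 * m ^ ((1:ℝ)/2) := by
        have h := intervalIntegral.integral_comp_sub_left (a := (0:ℝ)) (b := m)
          (fun u : ℝ => u ^ (-(1:ℝ)/2)) m
        rw [sub_zero, sub_self] at h
        rw [h, intervalIntegral.integral_symm, integral_rpow (Or.inl (by norm_num))]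
        rw [Real.zero_rpow (by norm_num)]
        norm_num
        rw [div_div_eq_mul_div]
        norm_num
        ring
      rw [hcs, intervalIntegral.integral_const, smul_eq_mul, sub_zero, mul_comm m Kc]
    calc runningCost M μ L m
        = ∫⁻ s in Ioo (0:ℝ) m, ENNReal.ofReal (∑ p ∈ M.E, μ s p.1 * M.lam p.1 p.2 (μ s)
            * tauStar (L s p.1 p.2 / M.lam p.1 p.2 (μ s) - 1)) := by
          rw [runningCost]
          exact (setLIntegral_congr Ioo_ae_eq_Ioc).symm
      _ ≤ ∫⁻ s in Ioo (0:ℝ) m, ENNReal.ofReal (G s) := by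
          refine setLIntegral_mono_ae
            ((ENNReal.measurable_ofReal.comp hGmeas).aemeasurable) ?_
          exact Filter.Eventually.of_forall fun s hs => ENNReal.ofReal_le_ofReal (hpt s hs)
      _ = ENNReal.ofReal (∫ s in Ioo (0:ℝ) m, G s) :=
          (ofReal_integral_eq_lintegral_ofReal hGint hGnn).symm
      _ ≤ ENNReal.ofReal (4 * M.c ^ (-(1:ℝ)/2) * m ^ ((1:ℝ)/2) + ((r*r+1 : ℝ) * Cb') * m) := by
          rw [hGval]
          apply ENNReal.ofReal_le_ofReal
          rw [hKcdef]
          ring_nf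
          exact le_refl _

end Stmt8
end Aux4
noncomputable section Aux5
namespace Stmt8
variable {r : ℕ}

lemma reach_mono {M : MeanFieldModel r} {α β : Fin r → ℝ} {ε₁ ε₂ : ℝ}
    (h : Reach M α β ε₁) (hle : ε₁ ≤ ε₂) : Reach M α β ε₂ := by
  obtain ⟨T, hT, μ, L, h1, h2, h3, h4, h5, h6⟩ := h
  exact ⟨T, hT, μ, L, h1, h2, h3, h4, h5, h6.trans (ENNReal.ofReal_le_ofReal hle)⟩

lemma Reach.end_mem {M : MeanFieldModel r} {α β : Fin r → ℝ} {ε : ℝ}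
    (h : Reach M α β ε) : β ∈ stdSimplex ℝ (Fin r) := by
  obtain ⟨T, hT, μ, L, _, _, _, h4, h5, _⟩ := h
  rw [← h4]; exact h5 T ⟨hT.le, le_rfl⟩

lemma reach_edge_eps {M : MeanFieldModel r} {a b : Fin r} (hab : (a, b) ∈ M.E)
    {ε : ℝ} (hε : 0 < ε) :
    ∃ δ : ℝ, 0 < δ ∧ ∀ α ∈ stdSimplex ℝ (Fin r), ∀ m : ℝ, 0 < m → m ≤ α a → m ≤ δ →
      Reach M α (fun i => α i + m * (if i = b then 1 else 0) - m * (if i = a then 1 else 0))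
        ε := by
  set c' := M.c ^ (-(1:ℝ)/2) with hc'
  have hc'0 : 0 ≤ c' := Real.rpow_nonneg M.c_pos.le _
  set K : ℝ := (r*r+1 : ℝ) * max M.Cb 0 with hK
  have hK0 : 0 ≤ K := by
    have := le_max_right M.Cb 0
    positivity
  refine ⟨min ((ε / (8 * c' + 1))^2) (ε / (2*(K+1))),
    lt_min (by positivity) (by positivity), ?_⟩
  intro α hα m hm hma hmδ
  refine reach_mono (edge_move hab hα hm hma) ?_
  rw [← hc', ← hK]
  have hm1 : m ≤ (ε / (8 * c' + 1))^2 := le_trans hmδ (min_le_left _ _)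
  have hm2 : m ≤ ε / (2*(K+1)) := le_trans hmδ (min_le_right _ _)
  have hq0 : 0 ≤ ε / (8 * c' + 1) := by positivity
  have hsq : m ^ ((1:ℝ)/2) ≤ ε / (8 * c' + 1) := by
    have h1 : (m ^ ((1:ℝ)/2))^2 = m := by
      rw [← Real.rpow_natCast (m ^ ((1:ℝ)/2)) 2, ← Real.rpow_mul hm.le]
      norm_num
    have h2 : (m ^ ((1:ℝ)/2))^2 ≤ (ε / (8 * c' + 1))^2 := by rw [h1]; exact hm1
    exact (pow_le_pow_iff_left₀ (Real.rpow_nonneg hm.le _) hq0 (by norm_num)).mp h2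
  have h4 : (0:ℝ) < 8 * c' + 1 := by positivity
  have hb1 : 4 * c' * m ^ ((1:ℝ)/2) ≤ ε / 2 := by
    have h5 := mul_le_mul_of_nonneg_left hsq (by positivity : (0:ℝ) ≤ 4 * c')
    have h3 : 4 * c' * (ε / (8 * c' + 1)) ≤ ε / 2 := by
      rw [← mul_div_assoc, div_le_div_iff₀ h4 two_pos]
      nlinarith
    linarith
  have hb2 : K * m ≤ ε / 2 := by
    have h5 := mul_le_mul_of_nonneg_left hm2 hK0
    have h3 : K * (ε / (2*(K+1))) ≤ ε / 2 := by
      rw [← mul_div_assoc, div_le_div_iff₀ (by positivity) two_pos]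
      nlinarith
    linarith
  linarith

lemma reach_chain {M : MeanFieldModel r} {a b : Fin r}
    (h : Relation.ReflTransGen (fun x y => (x, y) ∈ M.E) a b) :
    ∀ ε : ℝ, 0 < ε → ∃ δ : ℝ, 0 < δ ∧ ∀ α ∈ stdSimplex ℝ (Fin r), ∀ m : ℝ,
      0 < m → m ≤ α a → m ≤ δ →
      Reach M α (fun i => α i + m * (if i = b then 1 else 0) - m * (if i = a then 1 else 0))
        ε := by
  induction h using Relation.ReflTransGen.head_induction_on with
  | refl =>
    intro ε hε
    refine ⟨1, one_pos, fun α hα m hm hma hmδ => ?_⟩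
    have he : (fun i => α i + m * (if i = b then (1:ℝ) else 0)
        - m * (if i = b then 1 else 0)) = α := by funext i; ring
    rw [he]
    exact reach_refl hα hε
  | @head a' c hedge htail ih =>
    intro ε hε
    obtain ⟨δ₁, hδ₁, h1⟩ := reach_edge_eps (M := M) hedge (half_pos hε)
    obtain ⟨δ₂, hδ₂, h2⟩ := ih (ε/2) (half_pos hε)
    refine ⟨min δ₁ δ₂, lt_min hδ₁ hδ₂, fun α hα m hm hma hmδ => ?_⟩
    have hac : a' ≠ c := fun h => M.no_diag a' (by rw [h] at hedge ⊢; exact hedge)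
    have hR1 := h1 α hα m hm hma (le_trans hmδ (min_le_left _ _))
    have hα₁s : (fun i => α i + m * (if i = c then (1:ℝ) else 0)
        - m * (if i = a' then 1 else 0)) ∈ stdSimplex ℝ (Fin r) := hR1.end_mem
    have hmc : m ≤ (fun i => α i + m * (if i = c then (1:ℝ) else 0)
        - m * (if i = a' then 1 else 0)) c := by
      show m ≤ α c + m * (if c = c then (1:ℝ) else 0) - m * (if c = a' then 1 else 0)
      rw [if_pos rfl, if_neg (Ne.symm hac)]
      have := hα.1 c
      linarith
    have hR2 := h2 _ hα₁s m hm hmc (le_trans hmδ (min_le_right _ _))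
    have hfin : (fun i => ((fun i => α i + m * (if i = c then (1:ℝ) else 0)
          - m * (if i = a' then 1 else 0)) i) + m * (if i = b then (1:ℝ) else 0)
          - m * (if i = c then 1 else 0))
        = (fun i => α i + m * (if i = b then (1:ℝ) else 0)
          - m * (if i = a' then 1 else 0)) := by
      funext i; simp only []; ring
    rw [hfin] at hR2
    have h6 := reach_trans (by linarith) (by linarith) hR1 hR2
    rwa [add_halves] at h6

lemma reach_near {M : MeanFieldModel r} (hr : 0 < r) : ∀ n : ℕ, ∀ ε : ℝ, 0 < ε →
    ∃ δ : ℝ, 0 < δ ∧ ∀ α ∈ stdSimplex ℝ (Fin r), ∀ β ∈ stdSimplex ℝ (Fin r),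
      (Finset.univ.filter (fun i => α i ≠ β i)).card ≤ n →
      (∀ i, |α i - β i| ≤ δ) → Reach M α β ε := by
  intro n
  induction n with
  | zero =>
    intro ε hε
    refine ⟨1, one_pos, fun α hα β hβ hcard hnear => ?_⟩
    have hαβ : α = β := by
      funext i
      by_contra hne
      have hmem : i ∈ Finset.univ.filter (fun i => α i ≠ β i) := by simp [hne]
      have h1 : 0 < (Finset.univ.filter (fun i => α i ≠ β i)).card :=
        Finset.card_pos.mpr ⟨i, hmem⟩
      omega
    rw [hαβ]
    exact reach_refl hβ hε
  | succ n ihn =>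
    intro ε hε
    obtain ⟨δ₂, hδ₂, h2⟩ := ihn (ε/2) (half_pos hε)
    have hpath : ∀ p : Fin r × Fin r, ∃ δ : ℝ, 0 < δ ∧ ∀ α ∈ stdSimplex ℝ (Fin r), ∀ m : ℝ,
        0 < m → m ≤ α p.1 → m ≤ δ →
        Reach M α (fun i => α i + m * (if i = p.2 then 1 else 0)
          - m * (if i = p.1 then 1 else 0)) (ε/2) :=
      fun p => reach_chain (M.irreducible p.1 p.2) (ε/2) (half_pos hε)
    choose δp hδp hprop using hpath
    have hne : (Finset.univ : Finset (Fin r × Fin r)).Nonempty := by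
      have hinst : Nonempty (Fin r × Fin r) := ⟨(⟨0, hr⟩, ⟨0, hr⟩)⟩
      exact Finset.univ_nonempty
    set δ₁ := Finset.univ.inf' hne δp with hδ₁def
    have hδ₁ : 0 < δ₁ := (Finset.lt_inf'_iff hne).mpr fun p _ => hδp p
    refine ⟨min δ₁ δ₂, lt_min hδ₁ hδ₂, fun α hα β hβ hcard hnear => ?_⟩
    by_cases hαβ : α = β
    · rw [hαβ]; exact reach_refl hβ hε
    · have hblt : ∃ a, β a < α a := by
        by_contra hno
        push_neg at hno
        obtain ⟨i0, hi0⟩ : ∃ i, α i ≠ β i := by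
          by_contra hall; push_neg at hall; exact hαβ (funext hall)
        have hlt : ∑ i, α i < ∑ i, β i :=
          Finset.sum_lt_sum (fun i _ => hno i)
            ⟨i0, Finset.mem_univ _, lt_of_le_of_ne (hno i0) hi0⟩
        rw [hα.2, hβ.2] at hlt
        exact lt_irrefl _ hlt
      have halt : ∃ b, α b < β b := by
        by_contra hno
        push_neg at hno
        obtain ⟨i0, hi0⟩ : ∃ i, α i ≠ β i := by
          by_contra hall; push_neg at hall; exact hαβ (funext hall)
        have hlt : ∑ i, β i < ∑ i, α i :=
          Finset.sum_lt_sum (fun i _ => hno i)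
            ⟨i0, Finset.mem_univ _, lt_of_le_of_ne (hno i0) (Ne.symm hi0)⟩
        rw [hα.2, hβ.2] at hlt
        exact lt_irrefl _ hlt
      obtain ⟨a, ha⟩ := hblt
      obtain ⟨b, hb⟩ := halt
      have hab : a ≠ b := fun h => by rw [h] at ha; exact lt_irrefl _ (ha.trans hb)
      set m := min (α a - β a) (β b - α b) with hmdef
      have hm : 0 < m := lt_min (by linarith) (by linarith)
      have hma : m ≤ α a := le_trans (min_le_left _ _) (by linarith [hβ.1 a])
      have hmm : m ≤ min δ₁ δ₂ := by
        have h5 : m ≤ α a - β a := min_le_left _ _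
        have h6 : α a - β a ≤ |α a - β a| := le_abs_self _
        exact le_trans h5 (le_trans h6 (hnear a))
      have hmδ1 : m ≤ δp (a, b) :=
        le_trans hmm (le_trans (min_le_left _ _) (Finset.inf'_le δp (Finset.mem_univ (a, b))))
      have hR1 : Reach M α (fun i => α i + m * (if i = b then (1:ℝ) else 0)
          - m * (if i = a then 1 else 0)) (ε/2) := hprop (a, b) α hα m hm hma hmδ1
      set α₁ : Fin r → ℝ := fun i => α i + m * (if i = b then (1:ℝ) else 0)
          - m * (if i = a then 1 else 0) with hα₁def
      have hα₁s : α₁ ∈ stdSimplex ℝ (Fin r) := hR1.end_mem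
      have hα₁a : α₁ a = α a - m := by simp [hα₁def, hab]
      have hα₁b : α₁ b = α b + m := by simp [hα₁def, Ne.symm hab]
      have hα₁o : ∀ i, i ≠ a → i ≠ b → α₁ i = α i := by
        intro i hia hib; simp [hα₁def, hia, hib]
      have hnear1 : ∀ i, |α₁ i - β i| ≤ δ₂ := by
        intro i
        have hle : |α₁ i - β i| ≤ |α i - β i| := by
          by_cases hia : i = a
          · rw [hia, hα₁a]
            have h7 : m ≤ α a - β a := min_le_left _ _
            rw [abs_of_nonneg (by linarith), abs_of_nonneg (by linarith)]
            linarith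
          · by_cases hib : i = b
            · rw [hib, hα₁b]
              have h7 : m ≤ β b - α b := min_le_right _ _
              rw [abs_of_nonpos (by linarith), abs_of_nonpos (by linarith)]
              linarith
            · rw [hα₁o i hia hib]
        exact le_trans hle (le_trans (hnear i) (min_le_right _ _))
      have hcard1 : (Finset.univ.filter (fun i => α₁ i ≠ β i)).card ≤ n := by
        have hkey : ∀ z : Fin r, (z = a ∧ α₁ z = β z) ∨ (z = b ∧ α₁ z = β z) →
            (Finset.univ.filter (fun i => α₁ i ≠ β i)) ⊆
              (Finset.univ.filter (fun i => α i ≠ β i)).erase z := by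
          intro z hz i hi
          have hi' : α₁ i ≠ β i := by
            have := Finset.mem_filter.mp hi
            exact this.2
          rw [Finset.mem_erase]
          constructor
          · intro hiz
            rcases hz with ⟨hza, hzeq⟩ | ⟨hzb, hzeq⟩ <;> exact hi' (hiz ▸ hzeq)
          · refine Finset.mem_filter.mpr ⟨Finset.mem_univ _, ?_⟩
            by_cases hia : i = a
            · rw [hia]; exact ne_of_gt ha
            · by_cases hib : i = b
              · rw [hib]; exact ne_of_lt hb
              · rwa [hα₁o i hia hib] at hi'
        rcases le_or_gt (α a - β a) (β b - α b) with hcase | hcase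
        · have hma' : m = α a - β a := min_eq_left hcase
          have hsub := hkey a (Or.inl ⟨rfl, by rw [hα₁a, hma']; ring⟩)
          calc (Finset.univ.filter (fun i => α₁ i ≠ β i)).card
              ≤ ((Finset.univ.filter (fun i => α i ≠ β i)).erase a).card :=
                Finset.card_le_card hsub
            _ ≤ n := by
                have hamem : a ∈ Finset.univ.filter (fun i => α i ≠ β i) :=
                  Finset.mem_filter.mpr ⟨Finset.mem_univ _, ne_of_gt ha⟩
                rw [Finset.card_erase_of_mem hamem]
                omega
        · have hmb' : m = β b - α b := min_eq_right hcase.le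
          have hsub := hkey b (Or.inr ⟨rfl, by rw [hα₁b, hmb']; ring⟩)
          calc (Finset.univ.filter (fun i => α₁ i ≠ β i)).card
              ≤ ((Finset.univ.filter (fun i => α i ≠ β i)).erase b).card :=
                Finset.card_le_card hsub
            _ ≤ n := by
                have hbmem : b ∈ Finset.univ.filter (fun i => α i ≠ β i) :=
                  Finset.mem_filter.mpr ⟨Finset.mem_univ _, ne_of_lt hb⟩
                rw [Finset.card_erase_of_mem hbmem]
                omega
      have hR2 := h2 α₁ hα₁s β hβ hcard1 hnear1
      have h6 := reach_trans (by linarith) (by linarith) hR1 hR2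
      rwa [add_halves] at h6

end Stmt8
end Aux5
/-- for every `ν ∈ M₁(Z)` the equivalence class
`{ ξ ∈ M₁(Z) : V(ξ|ν) = V(ν|ξ) = 0 }` is closed, hence compact. -/
theorem stmt8 (r : ℕ) (hr : 0 < r) (M : MeanFieldModel r)
    (ν : Fin r → ℝ) (hν : ν ∈ stdSimplex ℝ (Fin r)) :
    IsClosed {ξ ∈ stdSimplex ℝ (Fin r) | VEquiv M ν ξ} ∧
    IsCompact {ξ ∈ stdSimplex ℝ (Fin r) | VEquiv M ν ξ} := by
  classical
  have hset : {ξ ∈ stdSimplex ℝ (Fin r) | VEquiv M ν ξ} ⊆ stdSimplex ℝ (Fin r) :=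
    fun ξ hξ => hξ.1
  have hclosed : IsClosed {ξ ∈ stdSimplex ℝ (Fin r) | VEquiv M ν ξ} := by
    apply IsSeqClosed.isClosed
    intro x p hmem htend
    have hps : p ∈ stdSimplex ℝ (Fin r) :=
      (isClosed_stdSimplex ℝ (Fin r)).mem_of_tendsto htend
        (Filter.Eventually.of_forall fun n => (hmem n).1)
    refine ⟨hps, ?_, ?_⟩
    · apply Stmt8.quasipotential_eq_zero_of_forall_reach
      intro ε hε
      obtain ⟨δ, hδ, hnear⟩ := Stmt8.reach_near (M := M) hr r (ε/2) (half_pos hε)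
      obtain ⟨N, hN⟩ := Metric.tendsto_atTop.mp htend δ hδ
      have hd := hN N le_rfl
      have hcoord : ∀ i, |x N i - p i| ≤ δ := fun i =>
        le_trans (by simpa [Real.dist_eq] using dist_le_pi_dist (x N) p i) hd.le
      have hR1 : Stmt8.Reach M ν (x N) (ε/2) :=
        Stmt8.reach_of_quasipotential_zero ((hmem N).2).1 (half_pos hε)
      have hR2 : Stmt8.Reach M (x N) p (ε/2) :=
        hnear (x N) (hmem N).1 p hps
          (le_trans (Finset.card_filter_le _ _) (by simp)) hcoord
      have h6 := Stmt8.reach_trans (by linarith) (by linarith) hR1 hR2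
      rwa [add_halves] at h6
    · apply Stmt8.quasipotential_eq_zero_of_forall_reach
      intro ε hε
      obtain ⟨δ, hδ, hnear⟩ := Stmt8.reach_near (M := M) hr r (ε/2) (half_pos hε)
      obtain ⟨N, hN⟩ := Metric.tendsto_atTop.mp htend δ hδ
      have hd := hN N le_rfl
      have hcoord : ∀ i, |p i - x N i| ≤ δ := fun i => by
        rw [abs_sub_comm]
        exact le_trans (by simpa [Real.dist_eq] using dist_le_pi_dist (x N) p i) hd.le
      have hR1 : Stmt8.Reach M p (x N) (ε/2) :=
        hnear p hps (x N) (hmem N).1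
          (le_trans (Finset.card_filter_le _ _) (by simp)) hcoord
      have hR2 : Stmt8.Reach M (x N) ν (ε/2) :=
        Stmt8.reach_of_quasipotential_zero ((hmem N).2).2 (half_pos hε)
      have h6 := Stmt8.reach_trans (by linarith) (by linarith) hR1 hR2
      rwa [add_halves] at h6
  exact ⟨hclosed, (isCompact_stdSimplex ℝ (Fin r)).of_isClosed_subset hclosed hset⟩
end

section
/- Under assumptions (A1)–(A3), suppose the McKean–Vlasov equation μ̇(t) = A_{μ(t)}^⊤ μ(t) has a unique globally asymptotically stable equilibrium ξ_0 ∈ M_1(Z). If s : M_1(Z) → [0,∞) is lower semicontinuous, satisfies the dynamic programming equation, and s(ν*) = 0 for some ν* ∈ M_1(Z), then s(ξ_0) = 0. -/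
open MeasureTheory Set ENNReal Filter

noncomputable section AuxGen

lemma lipschitzWith_pi' {α : Type*} [PseudoMetricSpace α] {ι : Type*} [Fintype ι]
    {F : α → ι → ℝ} {K : NNReal} (h : ∀ i, LipschitzWith K (fun x => F x i)) :
    LipschitzWith K F := by
  intro x y
  rw [edist_pi_def]
  exact Finset.sup_le fun i _ => h i x y

lemma lipschitz_mul_bdd {α : Type*} [PseudoMetricSpace α] {f g : α → ℝ} {Kf Kg : NNReal}
    {Bf Bg : ℝ}
    (hf : LipschitzWith Kf f) (hg : LipschitzWith Kg g)
    (hbf : ∀ x, |f x| ≤ Bf) (hbg : ∀ x, |g x| ≤ Bg) :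
    LipschitzWith (Kf * Bg.toNNReal + Bf.toNNReal * Kg) (fun x => f x * g x) := by
  apply LipschitzWith.of_dist_le_mul
  intro x y
  have hBf : (0:ℝ) ≤ Bf := le_trans (abs_nonneg _) (hbf x)
  have hBg : (0:ℝ) ≤ Bg := le_trans (abs_nonneg _) (hbg x)
  have hd1 : |f x - f y| ≤ (Kf : ℝ) * dist x y := by
    rw [← Real.dist_eq]; exact hf.dist_le_mul x y
  have hd2 : |g x - g y| ≤ (Kg : ℝ) * dist x y := by
    rw [← Real.dist_eq]; exact hg.dist_le_mul x y
  have h1 : f x * g x - f y * g y = (f x - f y) * g x + f y * (g x - g y) := by ring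
  rw [Real.dist_eq, h1]
  calc |(f x - f y) * g x + f y * (g x - g y)|
      ≤ |(f x - f y) * g x| + |f y * (g x - g y)| := abs_add_le _ _
    _ = |f x - f y| * |g x| + |f y| * |g x - g y| := by rw [abs_mul, abs_mul]
    _ ≤ ((Kf : ℝ) * dist x y) * Bg + Bf * ((Kg : ℝ) * dist x y) :=
        add_le_add
          (mul_le_mul hd1 (hbg x) (abs_nonneg _)
            (mul_nonneg (NNReal.coe_nonneg _) dist_nonneg))
          (mul_le_mul (hbf y) hd2 (abs_nonneg _) hBf)
    _ = ((Kf : ℝ) * Bg + Bf * (Kg : ℝ)) * dist x y := by ring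
    _ = ((Kf * Bg.toNNReal + Bf.toNNReal * Kg : NNReal) : ℝ) * dist x y := by
        push_cast
        rw [Real.coe_toNNReal _ hBf, Real.coe_toNNReal _ hBg]

lemma lipschitz_finset_sum {α : Type*} [PseudoMetricSpace α] {ι : Type*} [DecidableEq ι]
    (s : Finset ι) (f : ι → α → ℝ) (K : ι → NNReal)
    (h : ∀ i ∈ s, LipschitzWith (K i) (f i)) :
    LipschitzWith (∑ i ∈ s, K i) (fun x => ∑ i ∈ s, f i x) := by
  induction s using Finset.induction with
  | empty => simpa using (LipschitzWith.const' (0:ℝ) (K := 0))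
  | @insert a s ha ih =>
      simp only [Finset.sum_insert ha]
      exact (h a (Finset.mem_insert_self a s)).add
        (ih fun i hi => h i (Finset.mem_insert_of_mem hi))

end AuxGen

noncomputable section AuxFlow

open Topology

variable {r : ℕ}

lemma flow_exists (F : (Fin r → ℝ) → (Fin r → ℝ)) (K : NNReal) (hF : LipschitzWith K F)
    (C : ℝ) (hC : 0 ≤ C) (hb : ∀ x, ‖F x‖ ≤ C) (x₀ : Fin r → ℝ) :
    ∃ η : ℝ → Fin r → ℝ, η 0 = x₀ ∧ ContinuousOn η (Ici 0) ∧
      (∀ t : ℝ, 0 < t → HasDerivAt η (F (η t)) t) ∧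
      HasDerivWithinAt η (F (η 0)) (Ici 0) 0 := by
  have hex : ∀ n : ℕ, ∃ f : ℝ → Fin r → ℝ, f 0 = x₀ ∧
      ∀ t ∈ Icc (0:ℝ) (n:ℝ), HasDerivWithinAt f (F (f t)) (Icc (0:ℝ) (n:ℝ)) t := by
    intro n
    have hpl : IsPicardLindelof (fun _ x => F x) (tmin := 0) (tmax := (n:ℝ))
        ⟨0, le_rfl, Nat.cast_nonneg n⟩ x₀ (⟨C, hC⟩ * (n : NNReal)) 0 ⟨C, hC⟩ K :=
      { lipschitzOnWith := fun t _ => hF.lipschitzOnWith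
        continuousOn := fun x _ => continuousOn_const
        norm_le := fun t _ x _ => hb x
        mul_max_le := by
          simp [max_eq_left (Nat.cast_nonneg (α := ℝ) n)]
          exact le_of_eq (by push_cast; rfl) }
    exact hpl.exists_eq_forall_mem_Icc_hasDerivWithinAt₀
  choose sol hsol0 hsold using hex
  have hcont : ∀ n : ℕ, ContinuousOn (sol n) (Icc 0 (n:ℝ)) :=
    fun n t ht => (hsold n t ht).continuousWithinAt
  have hmem : ∀ (n : ℕ) (t : ℝ), 0 ≤ t → t < (n:ℝ) → Icc (0:ℝ) (n:ℝ) ∈ 𝓝[Ici t] t := by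
    intro n t ht0 htn
    have h1 : Ici t ∩ Iio (n:ℝ) ∈ 𝓝[Ici t] t :=
      inter_mem self_mem_nhdsWithin (mem_nhdsWithin_of_mem_nhds (Iio_mem_nhds htn))
    exact mem_of_superset h1 (fun u hu => ⟨le_trans ht0 hu.1, hu.2.le⟩)
  have hmem0 : ∀ (n : ℕ) (t : ℝ), 0 ≤ t → t < (n:ℝ) → Icc (0:ℝ) (n:ℝ) ∈ 𝓝[Ici 0] t := by
    intro n t ht0 htn
    have h1 : Ici (0:ℝ) ∩ Iio (n:ℝ) ∈ 𝓝[Ici 0] t := by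
      refine inter_mem self_mem_nhdsWithin (mem_nhdsWithin_of_mem_nhds (Iio_mem_nhds htn))
    exact mem_of_superset h1 (fun u hu => ⟨hu.1, hu.2.le⟩)
  have hIci : ∀ n : ℕ, ∀ t ∈ Ico (0:ℝ) (n:ℝ), HasDerivWithinAt (sol n) (F (sol n t)) (Ici t) t :=
    fun n t ht =>
      (hsold n t ⟨ht.1, ht.2.le⟩).mono_of_mem_nhdsWithin (hmem n t ht.1 ht.2)
  have hcomp : ∀ (n m : ℕ), (n:ℝ) ≤ (m:ℝ) → EqOn (sol n) (sol m) (Icc 0 (n:ℝ)) := by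
    intro n m hnm
    exact ODE_solution_unique (v := fun _ x => F x) (fun _ => hF) (hcont n)
      (fun t ht => hIci n t ht) ((hcont m).mono (Icc_subset_Icc le_rfl hnm))
      (fun t ht => hIci m t ⟨ht.1, lt_of_lt_of_le ht.2 hnm⟩)
      ((hsol0 n).trans (hsol0 m).symm)
  have hagree : ∀ (n : ℕ) (t : ℝ), t ∈ Icc (0:ℝ) (n:ℝ) → sol (⌊t⌋₊ + 1) t = sol n t := by
    intro n t ht
    have h1 : t ∈ Icc (0:ℝ) ((⌊t⌋₊ + 1 : ℕ):ℝ) :=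
      ⟨ht.1, by push_cast; exact (Nat.lt_floor_add_one t).le⟩
    have e1 := hcomp (⌊t⌋₊ + 1) (max (⌊t⌋₊ + 1) n) (Nat.cast_le.mpr (le_max_left _ _)) h1
    have e2 := hcomp n (max (⌊t⌋₊ + 1) n) (Nat.cast_le.mpr (le_max_right _ _)) ht
    rw [e1, e2]
  refine ⟨fun t => sol (⌊t⌋₊ + 1) t, by simpa using hsol0 1, ?_, ?_, ?_⟩
  · -- continuity
    intro t ht
    have htn : t < ((⌊t⌋₊ + 1 : ℕ):ℝ) := by push_cast; exact Nat.lt_floor_add_one t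
    have h2 : ContinuousWithinAt (sol (⌊t⌋₊ + 1)) (Ici 0) t :=
      (hcont (⌊t⌋₊ + 1) t ⟨ht, htn.le⟩).mono_of_mem_nhdsWithin (hmem0 _ t ht htn)
    refine h2.congr_of_eventuallyEq ?_ (hagree (⌊t⌋₊ + 1) t ⟨ht, htn.le⟩)
    have h1 : Ici (0:ℝ) ∩ Iio ((⌊t⌋₊ + 1 : ℕ):ℝ) ∈ 𝓝[Ici 0] t :=
      inter_mem self_mem_nhdsWithin (mem_nhdsWithin_of_mem_nhds (Iio_mem_nhds htn))
    exact eventuallyEq_of_mem h1 (fun u hu => hagree (⌊t⌋₊ + 1) u ⟨hu.1, hu.2.le⟩)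
  · -- HasDerivAt for t > 0
    intro t ht
    have htn : t < ((⌊t⌋₊ + 1 : ℕ):ℝ) := by push_cast; exact Nat.lt_floor_add_one t
    have h1 : HasDerivAt (sol (⌊t⌋₊ + 1)) (F (sol (⌊t⌋₊ + 1) t)) t :=
      (hsold (⌊t⌋₊ + 1) t ⟨ht.le, htn.le⟩).hasDerivAt (Icc_mem_nhds ht htn)
    have h2 : (fun u => sol (⌊u⌋₊ + 1) u) =ᶠ[𝓝 t] sol (⌊t⌋₊ + 1) :=
      eventuallyEq_of_mem (Ioo_mem_nhds ht htn)
        (fun u hu => hagree (⌊t⌋₊ + 1) u ⟨hu.1.le, hu.2.le⟩)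
    have h3 := h1.congr_of_eventuallyEq h2
    show HasDerivAt (fun u => sol (⌊u⌋₊ + 1) u) (F (sol (⌊t⌋₊ + 1) t)) t
    exact h3
  · -- HasDerivWithinAt at 0
    have h00 : (0:ℝ) ∈ Icc (0:ℝ) ((1:ℕ):ℝ) := by norm_num
    have h1 : HasDerivWithinAt (sol 1) (F (sol 1 0)) (Ici 0) 0 :=
      (hsold 1 0 h00).mono_of_mem_nhdsWithin (hmem0 1 0 le_rfl (by norm_num))
    have h2 : (fun u => sol (⌊u⌋₊ + 1) u) =ᶠ[𝓝[Ici 0] 0] sol 1 := by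
      have hm : Ici (0:ℝ) ∩ Iio ((1:ℕ):ℝ) ∈ 𝓝[Ici 0] 0 :=
        inter_mem self_mem_nhdsWithin
          (mem_nhdsWithin_of_mem_nhds (Iio_mem_nhds (by norm_num)))
      exact eventuallyEq_of_mem hm (fun u hu => hagree 1 u ⟨hu.1, hu.2.le⟩)
    have hagree0 : sol (⌊(0:ℝ)⌋₊ + 1) 0 = sol 1 0 := hagree 1 0 h00
    have h3 := h1.congr_of_eventuallyEq h2 hagree0
    show HasDerivWithinAt (fun u => sol (⌊u⌋₊ + 1) u) (F (sol (⌊(0:ℝ)⌋₊ + 1) 0)) (Ici 0) 0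
    rw [hagree0]
    exact h3

end AuxFlow

noncomputable section AuxInv

open Topology

variable {r : ℕ}

lemma flow_nonneg (F : (Fin r → ℝ) → Fin r → ℝ) (η : ℝ → Fin r → ℝ)
    (hcont : ContinuousOn η (Ici 0))
    (hd : ∀ t : ℝ, 0 < t → HasDerivAt η (F (η t)) t)
    (hsign : ∀ x : Fin r → ℝ, ∀ i : Fin r, x i ≤ 0 → 0 ≤ F x i)
    (i : Fin r) (h0 : 0 ≤ η 0 i) : ∀ t : ℝ, 0 ≤ t → 0 ≤ η t i := by
  intro t ht
  rcases ht.eq_or_lt with h | h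
  · rw [← h]; exact h0
  by_contra hneg
  push_neg at hneg
  have hucont : ContinuousOn (fun s => η s i) (Icc 0 t) :=
    (continuous_apply i).comp_continuousOn (hcont.mono Icc_subset_Ici_self)
  have hclosed : IsClosed (Icc 0 t ∩ (fun s => η s i) ⁻¹' Ici 0) :=
    hucont.preimage_isClosed_of_isClosed isClosed_Icc isClosed_Ici
  have hS0 : (0:ℝ) ∈ Icc 0 t ∩ (fun s => η s i) ⁻¹' Ici 0 := ⟨⟨le_rfl, h.le⟩, h0⟩
  have hbdd : BddAbove (Icc 0 t ∩ (fun s => η s i) ⁻¹' Ici 0) :=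
    (bddAbove_Icc (a := (0:ℝ)) (b := t)).mono inter_subset_left
  set t0 := sSup (Icc 0 t ∩ (fun s => η s i) ⁻¹' Ici 0) with ht0def
  have ht0 : t0 ∈ Icc 0 t ∩ (fun s => η s i) ⁻¹' Ici 0 :=
    hclosed.csSup_mem ⟨0, hS0⟩ hbdd
  have ht0t : t0 < t := by
    rcases lt_or_eq_of_le ht0.1.2 with h' | h'
    · exact h'
    · exfalso; have := ht0.2; rw [h'] at this; exact absurd this (not_le.mpr hneg)
  have hneg' : ∀ s, s ∈ Ioo t0 t → η s i < 0 := by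
    intro s hs
    by_contra hge; push_neg at hge
    have hmemS : s ∈ Icc 0 t ∩ (fun u => η u i) ⁻¹' Ici 0 :=
      ⟨⟨le_trans ht0.1.1 hs.1.le, hs.2.le⟩, hge⟩
    exact absurd (le_csSup hbdd hmemS) (not_le.mpr hs.1)
  have hud : ∀ s ∈ interior (Icc t0 t),
      HasDerivWithinAt (fun u => η u i) (F (η s) i) (interior (Icc t0 t)) s := by
    intro s hs
    rw [interior_Icc] at hs
    have h1 : HasDerivAt (fun u => η u i) (F (η s) i) s :=
      (ContinuousLinearMap.proj (R := ℝ) (φ := fun _ : Fin r => ℝ)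
        i).hasFDerivAt.comp_hasDerivAt s (hd s (lt_of_le_of_lt ht0.1.1 hs.1))
    exact h1.hasDerivWithinAt
  have hpos : ∀ s ∈ interior (Icc t0 t), 0 ≤ F (η s) i := by
    intro s hs
    rw [interior_Icc] at hs
    exact hsign _ i (hneg' s hs).le
  have hmono := monotoneOn_of_hasDerivWithinAt_nonneg (convex_Icc t0 t)
    (hucont.mono (Icc_subset_Icc ht0.1.1 le_rfl)) hud hpos
  have hle : η t0 i ≤ η t i :=
    hmono ⟨le_rfl, ht0t.le⟩ ⟨ht0t.le, le_rfl⟩ ht0t.le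
  exact absurd (le_trans ht0.2 hle) (not_le.mpr hneg)

lemma flow_sum_const (F : (Fin r → ℝ) → Fin r → ℝ) (η : ℝ → Fin r → ℝ)
    (hcont : ContinuousOn η (Ici 0))
    (hd : ∀ t : ℝ, 0 < t → HasDerivAt η (F (η t)) t)
    (hd0 : HasDerivWithinAt η (F (η 0)) (Ici 0) 0)
    (hsum : ∀ x, ∑ i, F x i = 0) :
    ∀ t : ℝ, 0 ≤ t → ∑ i, η t i = ∑ i, η 0 i := by
  intro t ht
  have hder : ∀ s ∈ Ico (0:ℝ) t, HasDerivWithinAt η (F (η s)) (Ici s) s := by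
    intro s hs
    rcases hs.1.eq_or_lt with h | h
    · rw [← h]; exact hd0
    · exact (hd s h).hasDerivWithinAt
  have hder' : ∀ s ∈ Ico (0:ℝ) t,
      HasDerivWithinAt (fun u => ∑ i, η u i) 0 (Ici s) s := by
    intro s hs
    have h1 : HasDerivWithinAt (fun u => ∑ i, η u i) (∑ i, F (η s) i) (Ici s) s :=
      HasDerivWithinAt.fun_sum (fun i _ =>
        (ContinuousLinearMap.proj (R := ℝ) (φ := fun _ : Fin r => ℝ)
          i).hasFDerivAt.comp_hasDerivWithinAt s (hder s hs))
    rwa [hsum (η s)] at h1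
  have hcont' : ContinuousOn (fun u => ∑ i, η u i) (Icc 0 t) :=
    continuousOn_finset_sum _ (fun i _ =>
      (continuous_apply i).comp_continuousOn (hcont.mono Icc_subset_Ici_self))
  exact constant_of_has_deriv_right_zero hcont' hder' t ⟨ht, le_rfl⟩

lemma flow_integral (F : (Fin r → ℝ) → Fin r → ℝ) (η : ℝ → Fin r → ℝ)
    (hcont : ContinuousOn η (Ici 0))
    (hd : ∀ t : ℝ, 0 < t → HasDerivAt η (F (η t)) t)
    (hFc : Continuous F)
    (t : ℝ) (ht : 0 ≤ t) (i : Fin r) :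
    η t i = η 0 i + ∫ s in Ioc (0:ℝ) t, F (η s) i := by
  have hucont : ContinuousOn (fun s => η s i) (Icc 0 t) :=
    (continuous_apply i).comp_continuousOn (hcont.mono Icc_subset_Ici_self)
  have hGcont : ContinuousOn (fun s => F (η s) i) (Icc 0 t) :=
    (continuous_apply i).comp_continuousOn
      (hFc.comp_continuousOn (hcont.mono Icc_subset_Ici_self))
  have hint : IntervalIntegrable (fun s => F (η s) i) volume 0 t := by
    apply ContinuousOn.intervalIntegrable
    rwa [uIcc_of_le ht]
  have hder : ∀ s ∈ Ioo (0:ℝ) t, HasDerivWithinAt (fun u => η u i) (F (η s) i) (Ioi s) s := by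
    intro s hs
    exact ((ContinuousLinearMap.proj (R := ℝ) (φ := fun _ : Fin r => ℝ)
      i).hasFDerivAt.comp_hasDerivAt s (hd s hs.1)).hasDerivWithinAt
  have h1 := intervalIntegral.integral_eq_sub_of_hasDeriv_right_of_le ht hucont hder hint
  rw [intervalIntegral.integral_of_le ht] at h1
  rw [h1]
  ring

end AuxInv

noncomputable section AuxModel

open Topology

variable {r : ℕ}

lemma tauStar_zero : tauStar 0 = 0 := by
  simp [tauStar]

lemma stdSimplex_coord_le_one {x : Fin r → ℝ} (hx : x ∈ stdSimplex ℝ (Fin r)) (i : Fin r) :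
    x i ≤ 1 := by
  have := Finset.single_le_sum (f := x) (fun j _ => hx.1 j) (Finset.mem_univ i)
  rwa [hx.2] at this

def extG (M : MeanFieldModel r) (i j : Fin r) : (Fin r → ℝ) → ℝ :=
  if h : (i, j) ∈ M.E then ((M.lam_lipschitz (i,j) h).choose_spec.extend_real).choose
  else fun _ => 0

lemma extG_spec (M : MeanFieldModel r) (i j : Fin r) (h : (i,j) ∈ M.E) :
    LipschitzWith ((M.lam_lipschitz (i,j) h).choose) (extG M i j) ∧
      EqOn (M.lam i j) (extG M i j) (stdSimplex ℝ (Fin r)) := by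
  simp only [extG, dif_pos h]
  exact ((M.lam_lipschitz (i,j) h).choose_spec.extend_real).choose_spec

def KKc (M : MeanFieldModel r) : NNReal :=
  M.E.sup fun p => if h : p ∈ M.E then (M.lam_lipschitz p h).choose else 0

lemma KKc_le (M : MeanFieldModel r) {p : Fin r × Fin r} (h : p ∈ M.E) :
    (M.lam_lipschitz p h).choose ≤ KKc M := by
  have h2 : (if h' : p ∈ M.E then (M.lam_lipschitz p h').choose else 0) ≤ KKc M :=
    Finset.le_sup (f := fun q => if h' : q ∈ M.E then (M.lam_lipschitz q h').choose else 0) h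
  rwa [dif_pos h] at h2

lemma card_filter_ne_le (i : Fin r) :
    (Finset.univ.filter (fun k => k ≠ i)).card ≤ r := by
  refine le_trans (Finset.card_filter_le _ _) ?_
  simp

def eLam (M : MeanFieldModel r) (i j : Fin r) (x : Fin r → ℝ) : ℝ :=
  if (i, j) ∈ M.E then max M.c (min (extG M i j x) M.Cb) else 0

lemma eLam_def_pos (M : MeanFieldModel r) {i j : Fin r} (h : (i, j) ∈ M.E) :
    eLam M i j = fun x => max M.c (min (extG M i j x) M.Cb) :=
  funext fun _ => if_pos h

lemma eLam_def_neg (M : MeanFieldModel r) {i j : Fin r} (h : (i, j) ∉ M.E) :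
    eLam M i j = fun _ => 0 :=
  funext fun _ => if_neg h

lemma eLam_nonneg (M : MeanFieldModel r) (i j : Fin r) (x : Fin r → ℝ) :
    0 ≤ eLam M i j x := by
  unfold eLam; split
  · exact le_trans M.c_pos.le (le_max_left _ _)
  · exact le_rfl

lemma eLam_le (M : MeanFieldModel r) (i j : Fin r) (x : Fin r → ℝ) :
    eLam M i j x ≤ max M.c M.Cb := by
  unfold eLam; split
  · exact max_le_max le_rfl (min_le_right _ _)
  · exact le_trans M.c_pos.le (le_max_left _ _)

lemma eLam_lip (M : MeanFieldModel r) (i j : Fin r) :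
    LipschitzWith (KKc M) (eLam M i j) := by
  by_cases h : (i, j) ∈ M.E
  · rw [eLam_def_pos M h]
    exact (((extG_spec M i j h).1.min_const M.Cb).const_max M.c).weaken (KKc_le M h)
  · rw [eLam_def_neg M h]
    exact LipschitzWith.const' (0:ℝ)

lemma eLam_eq (M : MeanFieldModel r) {i j : Fin r} (hij : i ≠ j) {x : Fin r → ℝ}
    (hx : x ∈ stdSimplex ℝ (Fin r)) : eLam M i j x = M.lam i j x := by
  by_cases h : (i, j) ∈ M.E
  · rw [eLam, if_pos h]
    rw [← (extG_spec M i j h).2 hx,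
      min_eq_left (M.lam_upper (i,j) h x hx), max_eq_right (M.lam_lower (i,j) h x hx)]
  · rw [eLam, if_neg h]
    exact (M.lam_off i j hij h x).symm

def eLamD (M : MeanFieldModel r) (i j : Fin r) (x : Fin r → ℝ) : ℝ :=
  if i = j then -∑ k ∈ Finset.univ.filter (fun k => k ≠ i), eLam M i k x
  else eLam M i j x

lemma eLamD_def_diag (M : MeanFieldModel r) (i : Fin r) :
    eLamD M i i = fun x => -∑ k ∈ Finset.univ.filter (fun k => k ≠ i), eLam M i k x :=
  funext fun _ => if_pos rfl

lemma eLamD_def_off (M : MeanFieldModel r) {i j : Fin r} (h : ¬ i = j) :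
    eLamD M i j = eLam M i j :=
  funext fun _ => if_neg h

lemma eLamD_eq (M : MeanFieldModel r) (i j : Fin r) {x : Fin r → ℝ}
    (hx : x ∈ stdSimplex ℝ (Fin r)) : eLamD M i j x = M.lam i j x := by
  by_cases h : i = j
  · subst h
    rw [eLamD, if_pos rfl, M.lam_diag i x]
    congr 1
    refine Finset.sum_congr rfl (fun k hk => ?_)
    exact eLam_eq M (Ne.symm (Finset.mem_filter.mp hk).2) hx
  · rw [eLamD, if_neg h]
    exact eLam_eq M h hx

lemma eLamD_abs_le (M : MeanFieldModel r) (hr : 0 < r) (i j : Fin r) (x : Fin r → ℝ) :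
    |eLamD M i j x| ≤ r * max M.c M.Cb := by
  have hB0 : (0:ℝ) ≤ max M.c M.Cb := le_trans M.c_pos.le (le_max_left _ _)
  have hcard : ((Finset.univ.filter (fun k => k ≠ i)).card : ℝ) ≤ (r : ℝ) := by
    exact_mod_cast card_filter_ne_le i
  by_cases h : i = j
  · subst h
    rw [eLamD, if_pos rfl, abs_neg, abs_of_nonneg (Finset.sum_nonneg fun k _ => eLam_nonneg M i k x)]
    calc ∑ k ∈ Finset.univ.filter (fun k => k ≠ i), eLam M i k x
        ≤ ∑ _k ∈ Finset.univ.filter (fun k => k ≠ i), max M.c M.Cb :=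
          Finset.sum_le_sum fun k _ => eLam_le M i k x
      _ = ((Finset.univ.filter (fun k => k ≠ i)).card : ℝ) * max M.c M.Cb := by
          rw [Finset.sum_const, nsmul_eq_mul]
      _ ≤ (r : ℝ) * max M.c M.Cb := mul_le_mul_of_nonneg_right hcard hB0
  · rw [eLamD, if_neg h, abs_of_nonneg (eLam_nonneg M i j x)]
    exact le_trans (eLam_le M i j x)
      (le_mul_of_one_le_left hB0 (by exact_mod_cast hr))

lemma eLamD_lip (M : MeanFieldModel r) (hr : 0 < r) (i j : Fin r) :
    LipschitzWith ((r : NNReal) * KKc M) (eLamD M i j) := by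
  have hone : (1 : NNReal) ≤ (r : NNReal) := by exact_mod_cast hr
  by_cases h : i = j
  · subst h
    rw [eLamD_def_diag M i]
    have h1 := lipschitz_finset_sum (Finset.univ.filter (fun k => k ≠ i))
      (fun k x => eLam M i k x) (fun _ => KKc M) (fun k _ => eLam_lip M i k)
    have h2 : (∑ _k ∈ Finset.univ.filter (fun k => k ≠ i), KKc M) ≤ (r : NNReal) * KKc M := by
      rw [Finset.sum_const, nsmul_eq_mul]
      refine mul_le_mul_left ?_ _
      exact_mod_cast card_filter_ne_le i
    exact (h1.weaken h2).neg
  · rw [eLamD_def_off M h]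
    exact (eLam_lip M i j).weaken (le_mul_of_one_le_left zero_le hone)

def clamp01 (u : ℝ) : ℝ := max 0 (min u 1)

lemma clamp01_lip : LipschitzWith 1 clamp01 := by
  have := (LipschitzWith.id (α := ℝ)).min_const 1
  exact this.const_max 0

lemma clamp01_nonneg (u : ℝ) : 0 ≤ clamp01 u := le_max_left _ _

lemma clamp01_le_one (u : ℝ) : clamp01 u ≤ 1 :=
  max_le zero_le_one (min_le_right _ _)

lemma clamp01_abs_le (u : ℝ) : |clamp01 u| ≤ 1 := by
  rw [abs_of_nonneg (clamp01_nonneg u)]; exact clamp01_le_one u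

lemma clamp01_of_nonpos {u : ℝ} (h : u ≤ 0) : clamp01 u = 0 :=
  max_eq_left (le_trans (min_le_left _ _) h)

lemma clamp01_eq {u : ℝ} (h0 : 0 ≤ u) (h1 : u ≤ 1) : clamp01 u = u := by
  rw [clamp01, min_eq_left h1, max_eq_right h0]

def mvField (M : MeanFieldModel r) : (Fin r → ℝ) → Fin r → ℝ :=
  fun x i => ∑ j, eLamD M j i x * clamp01 (x j)

lemma mvField_lip (M : MeanFieldModel r) (hr : 0 < r) :
    ∃ K : NNReal, LipschitzWith K (mvField M) := by
  classical
  set B1 : ℝ := r * max M.c M.Cb with hB1def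
  set Kt : NNReal := ((r : NNReal) * KKc M) * (1:ℝ).toNNReal + B1.toNNReal * (1 * 1) with hKtdef
  refine ⟨∑ _j : Fin r, Kt, lipschitzWith_pi' fun i => ?_⟩
  have h := lipschitz_finset_sum (Finset.univ) (fun j x => eLamD M j i x * clamp01 (x j))
    (fun _ => Kt) (fun j _ => ?_)
  · exact h
  · refine lipschitz_mul_bdd (eLamD_lip M hr j i)
      (clamp01_lip.comp (LipschitzWith.eval j)) (eLamD_abs_le M hr j i) ?_
    intro x
    exact clamp01_abs_le (x j)

lemma mvField_bound (M : MeanFieldModel r) (hr : 0 < r) (x : Fin r → ℝ) :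
    ‖mvField M x‖ ≤ r * (r * max M.c M.Cb) := by
  have hB0 : (0:ℝ) ≤ max M.c M.Cb := le_trans M.c_pos.le (le_max_left _ _)
  have hB1 : (0:ℝ) ≤ (r:ℝ) * max M.c M.Cb := mul_nonneg (Nat.cast_nonneg r) hB0
  have hB : (0:ℝ) ≤ (r:ℝ) * ((r:ℝ) * max M.c M.Cb) := mul_nonneg (Nat.cast_nonneg r) hB1
  rw [pi_norm_le_iff_of_nonneg hB]
  intro i
  rw [Real.norm_eq_abs]
  calc |∑ j, eLamD M j i x * clamp01 (x j)|
      ≤ ∑ j, |eLamD M j i x * clamp01 (x j)| := Finset.abs_sum_le_sum_abs _ _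
    _ ≤ ∑ _j : Fin r, (r:ℝ) * max M.c M.Cb := by
        refine Finset.sum_le_sum fun j _ => ?_
        rw [abs_mul]
        calc |eLamD M j i x| * |clamp01 (x j)| ≤ ((r:ℝ) * max M.c M.Cb) * 1 :=
              mul_le_mul (eLamD_abs_le M hr j i x) (clamp01_abs_le (x j)) (abs_nonneg _) hB1
          _ = (r:ℝ) * max M.c M.Cb := mul_one _
    _ = (r:ℝ) * ((r:ℝ) * max M.c M.Cb) := by
        rw [Finset.sum_const, nsmul_eq_mul, Finset.card_univ, Fintype.card_fin]

lemma mvField_sum (M : MeanFieldModel r) (x : Fin r → ℝ) :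
    ∑ i, mvField M x i = 0 := by
  classical
  unfold mvField
  rw [Finset.sum_comm]
  refine Finset.sum_eq_zero fun j _ => ?_
  have h1 : ∑ i, eLamD M j i x * clamp01 (x j) = (∑ i, eLamD M j i x) * clamp01 (x j) := by
    rw [Finset.sum_mul]
  rw [h1]
  suffices hz : ∑ i, eLamD M j i x = 0 by rw [hz, zero_mul]
  have h2 : ∑ i, eLamD M j i x
      = eLamD M j j x + ∑ i ∈ Finset.univ.erase j, eLamD M j i x := by
    rw [← Finset.sum_erase_add _ _ (Finset.mem_univ j)]
    ring
  rw [h2]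
  have h3 : ∑ i ∈ Finset.univ.erase j, eLamD M j i x
      = ∑ i ∈ Finset.univ.filter (fun k => k ≠ j), eLam M j i x := by
    rw [Finset.filter_ne']
    refine Finset.sum_congr rfl fun i hi => ?_
    have hji : ¬ j = i := Ne.symm (Finset.ne_of_mem_erase hi)
    rw [eLamD, if_neg hji]
  rw [h3]
  have h4 : eLamD M j j x = -∑ k ∈ Finset.univ.filter (fun k => k ≠ j), eLam M j k x :=
    if_pos rfl
  rw [h4]
  ring

lemma mvField_sign (M : MeanFieldModel r) (x : Fin r → ℝ) (i : Fin r) (hxi : x i ≤ 0) :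
    0 ≤ mvField M x i := by
  refine Finset.sum_nonneg fun j _ => ?_
  by_cases h : j = i
  · subst h
    rw [clamp01_of_nonpos hxi, mul_zero]
  · rw [eLamD, if_neg h]
    exact mul_nonneg (eLam_nonneg M j i x) (clamp01_nonneg _)

lemma mvField_simplex (M : MeanFieldModel r) {x : Fin r → ℝ}
    (hx : x ∈ stdSimplex ℝ (Fin r)) (i : Fin r) :
    mvField M x i = ∑ j, M.lam j i x * x j := by
  refine Finset.sum_congr rfl fun j _ => ?_
  rw [eLamD_eq M j i hx, clamp01_eq (hx.1 j) (stdSimplex_coord_le_one hx j)]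

end AuxModel

/-- if the McKean–Vlasov equation has a unique globally
asymptotically stable equilibrium `ξ₀` and `s ≥ 0` is lower semicontinuous on
`M₁(Z)`, satisfies the dynamic programming equation and vanishes somewhere, then
`s(ξ₀) = 0`. -/
theorem stmt11 (r : ℕ) (hr : 0 < r) (M : MeanFieldModel r)
    (ξ₀ : Fin r → ℝ) (hGAS : IsUniqueGASEquilibrium M ξ₀)
    (s : (Fin r → ℝ) → ℝ)
    (hs_nonneg : ∀ ξ ∈ stdSimplex ℝ (Fin r), 0 ≤ s ξ)
    (hs_lsc : LowerSemicontinuousOn s (stdSimplex ℝ (Fin r)))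
    (hDPE : SatisfiesDPE M s)
    (hzero : ∃ ν ∈ stdSimplex ℝ (Fin r), s ν = 0) :
    s ξ₀ = 0 := by
  classical
  obtain ⟨ν, hνmem, hνzero⟩ := hzero
  obtain ⟨K, hK⟩ := mvField_lip M hr
  have hB0 : (0:ℝ) ≤ max M.c M.Cb := le_trans M.c_pos.le (le_max_left _ _)
  have hC : (0:ℝ) ≤ r * (r * max M.c M.Cb) :=
    mul_nonneg (Nat.cast_nonneg r) (mul_nonneg (Nat.cast_nonneg r) hB0)
  obtain ⟨η, hη0, hηcont, hηd, hηd0⟩ :=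
    flow_exists (mvField M) K hK _ hC (mvField_bound M hr) ν
  have hnonneg : ∀ t : ℝ, 0 ≤ t → ∀ i, 0 ≤ η t i := by
    intro t ht i
    exact flow_nonneg (mvField M) η hηcont hηd (fun x i hx => mvField_sign M x i hx) i
      (by rw [hη0]; exact hνmem.1 i) t ht
  have hsum1 : ∀ t : ℝ, 0 ≤ t → ∑ i, η t i = 1 := by
    intro t ht
    rw [flow_sum_const (mvField M) η hηcont hηd hηd0 (mvField_sum M) t ht, hη0]
    exact hνmem.2
  have hsimp : ∀ t : ℝ, 0 ≤ t → η t ∈ stdSimplex ℝ (Fin r) :=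
    fun t ht => ⟨fun i => hnonneg t ht i, hsum1 t ht⟩
  have hFc : Continuous (mvField M) := hK.continuous
  have hMVint : ∀ t : ℝ, 0 ≤ t → ∀ i,
      η t i = η 0 i + ∫ u in Ioc (0:ℝ) t, ∑ j, M.lam j i (η u) * η u j := by
    intro t ht i
    have h1 := flow_integral (mvField M) η hηcont hηd hFc t ht i
    rw [h1]
    congr 1
    refine setIntegral_congr_fun measurableSet_Ioc (fun u hu => ?_)
    exact mvField_simplex M (hsimp u hu.1.le) i
  have hoffcont : ∀ i j : Fin r, i ≠ j → ContinuousOn (M.lam i j) (stdSimplex ℝ (Fin r)) := by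
    intro i j hij
    by_cases h : (i, j) ∈ M.E
    · exact (M.lam_lipschitz (i,j) h).choose_spec.continuousOn
    · exact continuousOn_const.congr (fun x _ => M.lam_off i j hij h x)
  have hlamcont : ∀ i j : Fin r, ContinuousOn (M.lam i j) (stdSimplex ℝ (Fin r)) := by
    intro i j
    by_cases hij : i = j
    · subst hij
      have h1 : ContinuousOn (fun μ : Fin r → ℝ =>
          -∑ k ∈ Finset.univ.filter (fun k => k ≠ i), M.lam i k μ)
          (stdSimplex ℝ (Fin r)) :=
        (continuousOn_finset_sum _ (fun k hk =>
          hoffcont i k (Ne.symm (Finset.mem_filter.mp hk).2))).neg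
      exact h1.congr (fun x _ => M.lam_diag i x)
    · exact hoffcont i j hij
  have hmcont : Continuous (fun t : ℝ => η (max t 0)) :=
    hηcont.comp_continuous (continuous_id.max continuous_const) (fun t => le_max_right t 0)
  have hmsimp : ∀ t : ℝ, η (max t 0) ∈ stdSimplex ℝ (Fin r) :=
    fun t => hsimp _ (le_max_right t 0)
  have hmeq : ∀ t : ℝ, 0 ≤ t → η (max t 0) = η t := fun t ht => by rw [max_eq_left ht]
  have hGcont : ∀ i : Fin r, Continuous (fun t : ℝ =>
      ∑ j, M.lam j i (η (max t 0)) * η (max t 0) j) :=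
    fun i => continuous_finset_sum _ (fun j _ =>
      ((hlamcont j i).comp_continuous hmcont hmsimp).mul
        ((continuous_apply j).comp hmcont))
  have hIntOn : ∀ (T : ℝ), 0 < T → ∀ i : Fin r,
      IntegrableOn (fun t => ∑ j, M.lam j i (η t) * η t j) (Icc 0 T) := by
    intro T hT i
    refine ((hGcont i).integrableOn_Icc).congr_fun ?_ measurableSet_Icc
    intro t ht
    simp only [hmeq t ht.1]
  have hMV : IsMVSolution M η :=
    ⟨fun t ht => hsimp t ht, hIntOn, fun t ht i => hMVint t ht i⟩
  have htend : Tendsto η atTop (nhds ξ₀) := hGAS.2.2 η hMV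
  set L : ℝ → Fin r → Fin r → ℝ := fun t i j => M.lam i j (η (max t 0)) with hLdef
  have hLrate : IsRateMatrix M L := by
    refine ⟨?_, ?_, ?_, ?_⟩
    · intro i j
      exact ((hlamcont i j).comp_continuous hmcont hmsimp).measurable
    · intro t i j hij
      by_cases h : (i, j) ∈ M.E
      · exact le_trans M.c_pos.le (M.lam_lower (i,j) h _ (hmsimp t))
      · exact le_of_eq (M.lam_off i j hij h _).symm
    · intro t i j hij h
      exact M.lam_off i j hij h _
    · intro t i
      exact M.lam_diag i _
  have hsT : ∀ T : ℝ, 0 < T → s (η T) = 0 := by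
    intro T hT
    have hODE : SolvesODE L η T := by
      constructor
      · intro i
        refine (hIntOn T hT i).congr_fun ?_ measurableSet_Icc
        intro t ht
        simp only [hLdef]
        rw [hmeq t ht.1]
      · intro t ht i
        rw [hMVint t ht.1 i]
        congr 1
        refine setIntegral_congr_fun measurableSet_Ioc (fun u hu => ?_)
        simp only [hLdef]
        rw [hmeq u hu.1.le]
    have hcost : runningCost M η L T = 0 := by
      have hzero' : ∀ t ∈ Ioc (0:ℝ) T,
          ENNReal.ofReal (∑ p ∈ M.E, η t p.1 * M.lam p.1 p.2 (η t) *
            tauStar (L t p.1 p.2 / M.lam p.1 p.2 (η t) - 1)) = 0 := by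
        intro t ht
        have hsum0 : (∑ p ∈ M.E, η t p.1 * M.lam p.1 p.2 (η t) *
            tauStar (L t p.1 p.2 / M.lam p.1 p.2 (η t) - 1)) = 0 := by
          refine Finset.sum_eq_zero (fun p hp => ?_)
          have hLp : L t p.1 p.2 = M.lam p.1 p.2 (η t) := by
            simp only [hLdef]
            rw [hmeq t ht.1.le]
          have hpos : (0:ℝ) < M.lam p.1 p.2 (η t) :=
            lt_of_lt_of_le M.c_pos (M.lam_lower p hp (η t) (hsimp t ht.1.le))
          rw [hLp, div_self hpos.ne', sub_self, tauStar_zero, mul_zero]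
        rw [hsum0, ENNReal.ofReal_zero]
      rw [runningCost]
      calc ∫⁻ t in Ioc (0:ℝ) T, ENNReal.ofReal (∑ p ∈ M.E, η t p.1 * M.lam p.1 p.2 (η t) *
            tauStar (L t p.1 p.2 / M.lam p.1 p.2 (η t) - 1))
          = ∫⁻ _ in Ioc (0:ℝ) T, (0:ℝ≥0∞) :=
            setLIntegral_congr_fun measurableSet_Ioc hzero'
        _ = 0 := lintegral_zero
    have hend : SEnd M T ν (η T) = 0 := by
      refine le_antisymm ?_ zero_le
      have h2 : SPath M T ν η ≤ runningCost M η L T :=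
        iInf₂_le L ⟨hLrate, hODE, hη0, fun t ht => hsimp t ht.1⟩
      rw [hcost] at h2
      exact le_trans (iInf₂_le η ⟨hη0, rfl⟩) h2
    have hDP := hDPE T hT (η T) (hsimp T hT.le)
    have hle : ENNReal.ofReal (s (η T)) ≤ 0 := by
      rw [hDP]
      refine le_trans (iInf₂_le ν hνmem) ?_
      rw [hνzero, ENNReal.ofReal_zero, hend, add_zero]
    have h0 : s (η T) ≤ 0 := ENNReal.ofReal_eq_zero.mp (le_antisymm hle zero_le)
    exact le_antisymm h0 (hs_nonneg _ (hsimp T hT.le))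
  by_contra hne
  have hpos : 0 < s ξ₀ := lt_of_le_of_ne (hs_nonneg ξ₀ hGAS.1) (Ne.symm hne)
  have hev := hs_lsc ξ₀ hGAS.1 0 hpos
  have htend' : Tendsto η atTop (nhdsWithin ξ₀ (stdSimplex ℝ (Fin r))) :=
    tendsto_nhdsWithin_iff.mpr ⟨htend, Filter.eventually_atTop.mpr ⟨0, fun t ht => hsimp t ht⟩⟩
  obtain ⟨T, hT1, hT2⟩ := ((htend'.eventually hev).and (Filter.eventually_gt_atTop 0)).exists
  rw [hsT T hT2] at hT1
  exact lt_irrefl 0 hT1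
end

section
/- Under assumptions (A1)–(A3) and (B), let s : M_1(Z) → [0,∞) be lower semicontinuous, satisfy the dynamic programming equation, and attain the value 0 at some point. Then: (i) there exist an index i_0 ∈ {1,…,l} and a point ξ_0 ∈ K_{i_0} with s(ξ_0) = 0; and (ii) there exist nonnegative real numbers s_1,…,s_l such that s(ξ) = s_i for every ξ ∈ K_i and every i = 1,…,l (i.e., s is constant on each K_i). -/
open MeasureTheory Set ENNReal Filter

noncomputable section
namespace Stmt13

open Real intervalIntegral

variable {r : ℕ}

/-- the mean-field vector field -/
def fld (M : MeanFieldModel r) (x : Fin r → ℝ) (i : Fin r) : ℝ := ∑ j, M.lam j i x * x j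

lemma mem_le_one {x : Fin r → ℝ} (hx : x ∈ stdSimplex ℝ (Fin r)) (i : Fin r) : x i ≤ 1 := by
  calc x i ≤ ∑ j, x j := Finset.single_le_sum (fun j _ => hx.1 j) (Finset.mem_univ i)
  _ = 1 := hx.2

lemma lam_offdiag_nonneg (M : MeanFieldModel r) {i j : Fin r} (hij : i ≠ j) {x : Fin r → ℝ}
    (hx : x ∈ stdSimplex ℝ (Fin r)) : 0 ≤ M.lam i j x := by
  by_cases hE : (i, j) ∈ M.E
  · exact le_trans M.c_pos.le (M.lam_lower (i, j) hE x hx)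
  · rw [M.lam_off i j hij hE x]

lemma lam_offdiag_le (M : MeanFieldModel r) {i j : Fin r} (hij : i ≠ j) {x : Fin r → ℝ}
    (hx : x ∈ stdSimplex ℝ (Fin r)) : M.lam i j x ≤ |M.Cb| := by
  by_cases hE : (i, j) ∈ M.E
  · exact (M.lam_upper (i, j) hE x hx).trans (le_abs_self _)
  · rw [M.lam_off i j hij hE x]; exact abs_nonneg _

lemma sum_fld (M : MeanFieldModel r) (x : Fin r → ℝ) : ∑ i, fld M x i = 0 := by
  unfold fld
  rw [Finset.sum_comm]
  apply Finset.sum_eq_zero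
  intro j _
  rw [← Finset.sum_mul]
  have h : ∑ i, M.lam j i x = 0 := by
    rw [← Finset.add_sum_erase _ (fun i => M.lam j i x) (Finset.mem_univ j),
      M.lam_diag j x, Finset.filter_ne']
    exact neg_add_cancel _
  rw [h, zero_mul]

lemma lam_continuousOn_ne (M : MeanFieldModel r) {i j : Fin r} (hij : i ≠ j) :
    ContinuousOn (M.lam i j) (stdSimplex ℝ (Fin r)) := by
  by_cases hE : (i, j) ∈ M.E
  · exact ((M.lam_lipschitz (i, j) hE).choose_spec).continuousOn
  · have h : M.lam i j = fun _ => (0 : ℝ) := funext (M.lam_off i j hij hE)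
    rw [h]; exact continuousOn_const

lemma lam_continuousOn (M : MeanFieldModel r) (i j : Fin r) :
    ContinuousOn (M.lam i j) (stdSimplex ℝ (Fin r)) := by
  rcases eq_or_ne i j with rfl | hij
  · have h : M.lam i i = fun μ => -∑ k ∈ Finset.univ.filter (fun k => k ≠ i), M.lam i k μ :=
      funext fun μ => M.lam_diag i μ
    rw [h]
    apply ContinuousOn.neg
    apply continuousOn_finset_sum
    intro k hk
    exact lam_continuousOn_ne M (Ne.symm (Finset.mem_filter.mp hk).2)
  · exact lam_continuousOn_ne M hij

lemma fld_comp_continuous (M : MeanFieldModel r) {u : ℝ → Fin r → ℝ} (hu : Continuous u)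
    (huS : ∀ t, u t ∈ stdSimplex ℝ (Fin r)) (i : Fin r) :
    Continuous fun t => fld M (u t) i := by
  unfold fld
  apply continuous_finset_sum
  intro j _
  exact ((lam_continuousOn M j i).comp_continuous hu huS).mul ((continuous_apply j).comp hu)

lemma exists_lam_const (M : MeanFieldModel r) : ∃ Λ : ℝ, 0 ≤ Λ ∧
    (∀ i j : Fin r, ∀ x ∈ stdSimplex ℝ (Fin r), |M.lam i j x| ≤ Λ) ∧
    (∀ i j : Fin r, ∀ x ∈ stdSimplex ℝ (Fin r), ∀ y ∈ stdSimplex ℝ (Fin r),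
      |M.lam i j x - M.lam i j y| ≤ Λ * dist x y) := by
  classical
  set Kf : Fin r × Fin r → ℝ := fun p =>
    if h : p ∈ M.E then ((M.lam_lipschitz p h).choose : ℝ) else 0 with hKf
  have hKf_nonneg : ∀ p, 0 ≤ Kf p := by
    intro p; rw [hKf]; dsimp only
    split
    · exact NNReal.coe_nonneg _
    · exact le_refl 0
  set Λ0 : ℝ := |M.Cb| + ∑ p ∈ M.E, Kf p with hΛ0
  have hsum_nonneg : 0 ≤ ∑ p ∈ M.E, Kf p := Finset.sum_nonneg fun p _ => hKf_nonneg p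
  have hΛ0_nonneg : 0 ≤ Λ0 := add_nonneg (abs_nonneg _) hsum_nonneg
  have hedge_bound : ∀ p ∈ M.E, ∀ x ∈ stdSimplex ℝ (Fin r), |M.lam p.1 p.2 x| ≤ Λ0 := by
    intro p hp x hx
    have h1 : 0 ≤ M.lam p.1 p.2 x := le_trans M.c_pos.le (M.lam_lower p hp x hx)
    rw [abs_of_nonneg h1]
    calc M.lam p.1 p.2 x ≤ M.Cb := M.lam_upper p hp x hx
    _ ≤ |M.Cb| := le_abs_self _
    _ ≤ Λ0 := le_add_of_nonneg_right hsum_nonneg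
  have hedge_lip : ∀ p ∈ M.E, ∀ x ∈ stdSimplex ℝ (Fin r), ∀ y ∈ stdSimplex ℝ (Fin r),
      |M.lam p.1 p.2 x - M.lam p.1 p.2 y| ≤ Λ0 * dist x y := by
    intro p hp x hx y hy
    have hspec := (M.lam_lipschitz p hp).choose_spec
    have h1 : |M.lam p.1 p.2 x - M.lam p.1 p.2 y| ≤ Kf p * dist x y := by
      have := hspec.dist_le_mul x hx y hy
      rw [Real.dist_eq] at this
      rw [hKf]; dsimp only; rw [dif_pos hp]
      exact this
    refine h1.trans (mul_le_mul_of_nonneg_right ?_ dist_nonneg)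
    calc Kf p ≤ ∑ q ∈ M.E, Kf q := Finset.single_le_sum (fun q _ => hKf_nonneg q) hp
    _ ≤ Λ0 := le_add_of_nonneg_left (abs_nonneg _)
  refine ⟨(r + 1) * Λ0, by positivity, ?_, ?_⟩
  · intro i j x hx
    rcases eq_or_ne i j with rfl | hij
    · rw [M.lam_diag i x, abs_neg]
      calc |∑ k ∈ Finset.univ.filter (fun k => k ≠ i), M.lam i k x|
          ≤ ∑ k ∈ Finset.univ.filter (fun k => k ≠ i), |M.lam i k x| :=
            Finset.abs_sum_le_sum_abs _ _
        _ ≤ ∑ k ∈ Finset.univ.filter (fun k => k ≠ i), Λ0 := by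
            apply Finset.sum_le_sum
            intro k hk
            have hki : i ≠ k := Ne.symm (Finset.mem_filter.mp hk).2
            by_cases hE : (i, k) ∈ M.E
            · exact hedge_bound (i, k) hE x hx
            · rw [M.lam_off i k hki hE x, abs_zero]; exact hΛ0_nonneg
        _ ≤ (r + 1) * Λ0 := by
            rw [Finset.sum_const, nsmul_eq_mul]
            apply mul_le_mul_of_nonneg_right ?_ hΛ0_nonneg
            calc ((Finset.univ.filter (fun k => k ≠ i)).card : ℝ)
                ≤ (Finset.univ : Finset (Fin r)).card := by
                  exact_mod_cast Finset.card_filter_le _ _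
              _ = r := by simp
              _ ≤ r + 1 := by linarith
    · by_cases hE : (i, j) ∈ M.E
      · refine (hedge_bound (i, j) hE x hx).trans ?_
        nlinarith [hΛ0_nonneg]
      · rw [M.lam_off i j hij hE x, abs_zero]; positivity
  · intro i j x hx y hy
    rcases eq_or_ne i j with rfl | hij
    · rw [M.lam_diag i x, M.lam_diag i y, neg_sub_neg, ← Finset.sum_sub_distrib]
      calc |∑ k ∈ Finset.univ.filter (fun k => k ≠ i), (M.lam i k y - M.lam i k x)|
          ≤ ∑ k ∈ Finset.univ.filter (fun k => k ≠ i), |M.lam i k y - M.lam i k x| :=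
            Finset.abs_sum_le_sum_abs _ _
        _ ≤ ∑ k ∈ Finset.univ.filter (fun k => k ≠ i), Λ0 * dist x y := by
            apply Finset.sum_le_sum
            intro k hk
            have hki : i ≠ k := Ne.symm (Finset.mem_filter.mp hk).2
            by_cases hE : (i, k) ∈ M.E
            · rw [abs_sub_comm]
              exact hedge_lip (i, k) hE x hx y hy
            · rw [M.lam_off i k hki hE x, M.lam_off i k hki hE y, sub_zero, abs_zero]
              positivity
        _ ≤ (r + 1) * Λ0 * dist x y := by
            rw [Finset.sum_const, nsmul_eq_mul]
            rw [← mul_assoc]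
            apply mul_le_mul_of_nonneg_right ?_ (by positivity)
            apply mul_le_mul_of_nonneg_right ?_ hΛ0_nonneg
            calc ((Finset.univ.filter (fun k => k ≠ i)).card : ℝ)
                ≤ (Finset.univ : Finset (Fin r)).card := by
                  exact_mod_cast Finset.card_filter_le _ _
              _ = r := by simp
              _ ≤ r + 1 := by linarith
    · by_cases hE : (i, j) ∈ M.E
      · refine (hedge_lip (i, j) hE x hx y hy).trans ?_
        apply mul_le_mul_of_nonneg_right ?_ dist_nonneg
        nlinarith [hΛ0_nonneg]
      · rw [M.lam_off i j hij hE x, M.lam_off i j hij hE y, sub_zero, abs_zero]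
        positivity

lemma exists_field_consts (M : MeanFieldModel r) (hr : 0 < r) : ∃ C Kg : ℝ, 0 < C ∧ 0 ≤ Kg ∧
    (∀ x ∈ stdSimplex ℝ (Fin r), ∀ i, 0 ≤ fld M x i + C * x i) ∧
    (∀ x ∈ stdSimplex ℝ (Fin r), ∑ i, (fld M x i + C * x i) = C) ∧
    (∀ x ∈ stdSimplex ℝ (Fin r), ∀ y ∈ stdSimplex ℝ (Fin r), ∀ i,
      |(fld M x i + C * x i) - (fld M y i + C * y i)| ≤ Kg * dist x y) := by
  obtain ⟨Λ, hΛ0, hΛb, hΛl⟩ := exists_lam_const M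
  have hrR : (1 : ℝ) ≤ r := by exact_mod_cast hr
  refine ⟨r * (|M.Cb| + 1), 2 * r * Λ + r * (|M.Cb| + 1), by positivity, by positivity, ?_, ?_, ?_⟩
  · -- nonnegativity
    intro x hx i
    set C : ℝ := r * (|M.Cb| + 1) with hC
    have hsplit : fld M x i = M.lam i i x * x i + ∑ j ∈ Finset.univ.erase i, M.lam j i x * x j :=
      (Finset.add_sum_erase _ (fun j => M.lam j i x * x j) (Finset.mem_univ i)).symm
    rw [hsplit]
    have h1 : 0 ≤ ∑ j ∈ Finset.univ.erase i, M.lam j i x * x j := by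
      apply Finset.sum_nonneg
      intro j hj
      exact mul_nonneg (lam_offdiag_nonneg M (Finset.mem_erase.mp hj).1 hx) (hx.1 j)
    have h2 : 0 ≤ (M.lam i i x + C) * x i := by
      apply mul_nonneg ?_ (hx.1 i)
      rw [M.lam_diag i x]
      have h3 : ∑ j ∈ Finset.univ.filter (fun j => j ≠ i), M.lam i j x ≤ C := by
        calc ∑ j ∈ Finset.univ.filter (fun j => j ≠ i), M.lam i j x
            ≤ ∑ j ∈ Finset.univ.filter (fun j => j ≠ i), |M.Cb| := by
              apply Finset.sum_le_sum
              intro j hj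
              exact lam_offdiag_le M (Ne.symm (Finset.mem_filter.mp hj).2) hx
          _ ≤ C := by
              rw [Finset.sum_const, nsmul_eq_mul, hC]
              have hcard : ((Finset.univ.filter (fun j => j ≠ i)).card : ℝ) ≤ r := by
                calc ((Finset.univ.filter (fun j => j ≠ i)).card : ℝ)
                    ≤ (Finset.univ : Finset (Fin r)).card := by
                      exact_mod_cast Finset.card_filter_le _ _
                  _ = r := by simp
              nlinarith [abs_nonneg M.Cb]
      linarith
    nlinarith [h1, h2]
  · -- sum
    intro x hx
    rw [Finset.sum_add_distrib, sum_fld, ← Finset.mul_sum, hx.2, zero_add, mul_one]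
  · -- Lipschitz
    intro x hx y hy i
    set C : ℝ := r * (|M.Cb| + 1) with hC
    have hd0 : 0 ≤ dist x y := dist_nonneg
    have hcoord : ∀ j, |x j - y j| ≤ dist x y := by
      intro j
      rw [← Real.dist_eq]
      exact dist_le_pi_dist x y j
    have hterm : ∀ j : Fin r, |M.lam j i x * x j - M.lam j i y * y j| ≤ 2 * Λ * dist x y := by
      intro j
      have key : M.lam j i x * x j - M.lam j i y * y j
          = M.lam j i x * (x j - y j) + y j * (M.lam j i x - M.lam j i y) := by ring
      rw [key]
      calc |M.lam j i x * (x j - y j) + y j * (M.lam j i x - M.lam j i y)|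
          ≤ |M.lam j i x * (x j - y j)| + |y j * (M.lam j i x - M.lam j i y)| := abs_add_le _ _
        _ = |M.lam j i x| * |x j - y j| + |y j| * |M.lam j i x - M.lam j i y| := by
            rw [abs_mul, abs_mul]
        _ ≤ Λ * dist x y + 1 * (Λ * dist x y) := by
            apply add_le_add
            · exact mul_le_mul (hΛb j i x hx) (hcoord j) (abs_nonneg _) hΛ0
            · apply mul_le_mul ?_ (hΛl j i x hx y hy) (abs_nonneg _) zero_le_one
              rw [abs_of_nonneg (hy.1 j)]
              exact mem_le_one hy j
        _ = 2 * Λ * dist x y := by ring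
    have hfld : |fld M x i - fld M y i| ≤ 2 * r * Λ * dist x y := by
      unfold fld
      rw [← Finset.sum_sub_distrib]
      calc |∑ j, (M.lam j i x * x j - M.lam j i y * y j)|
          ≤ ∑ j, |M.lam j i x * x j - M.lam j i y * y j| := Finset.abs_sum_le_sum_abs _ _
        _ ≤ ∑ _j : Fin r, 2 * Λ * dist x y := Finset.sum_le_sum fun j _ => hterm j
        _ = r * (2 * Λ * dist x y) := by rw [Finset.sum_const, nsmul_eq_mul]; simp
        _ = 2 * r * Λ * dist x y := by ring
    calc |(fld M x i + C * x i) - (fld M y i + C * y i)|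
        = |(fld M x i - fld M y i) + C * (x i - y i)| := by ring_nf
      _ ≤ |fld M x i - fld M y i| + |C * (x i - y i)| := abs_add_le _ _
      _ ≤ 2 * r * Λ * dist x y + C * dist x y := by
          apply add_le_add hfld
          rw [abs_mul, abs_of_nonneg (by positivity : (0:ℝ) ≤ C)]
          exact mul_le_mul_of_nonneg_left (hcoord i) (by positivity)
      _ = (2 * r * Λ + C) * dist x y := by ring

lemma local_sol (M : MeanFieldModel r) (C Kg T0 : ℝ) (hC : 0 ≤ C) (hKg : 0 ≤ Kg)
    (hgnn : ∀ x ∈ stdSimplex ℝ (Fin r), ∀ i, 0 ≤ fld M x i + C * x i)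
    (hgsum : ∀ x ∈ stdSimplex ℝ (Fin r), ∑ i, (fld M x i + C * x i) = C)
    (hglip : ∀ x ∈ stdSimplex ℝ (Fin r), ∀ y ∈ stdSimplex ℝ (Fin r), ∀ i,
      |(fld M x i + C * x i) - (fld M y i + C * y i)| ≤ Kg * dist x y)
    (hT0 : 0 < T0) (hsmall : Kg * T0 ≤ 1/2)
    (ν : Fin r → ℝ) (hν : ν ∈ stdSimplex ℝ (Fin r)) :
    ∃ μ : ℝ → Fin r → ℝ, Continuous μ ∧ (∀ t, μ t ∈ stdSimplex ℝ (Fin r)) ∧ μ 0 = ν ∧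
      ∀ t ∈ Icc (0:ℝ) T0, ∀ i, μ t i = ν i + ∫ s in (0:ℝ)..t, fld M (μ s) i := by
  classical
  have hle : (0:ℝ) ≤ T0 := hT0.le
  -- the complete space of simplex-valued continuous paths
  haveI : CompleteSpace {u : C(Icc (0:ℝ) T0, Fin r → ℝ) // ∀ z, u z ∈ stdSimplex ℝ (Fin r)} := by
    have hcl : IsClosed {u : C(Icc (0:ℝ) T0, Fin r → ℝ) | ∀ z, u z ∈ stdSimplex ℝ (Fin r)} := by
      have he : {u : C(Icc (0:ℝ) T0, Fin r → ℝ) | ∀ z, u z ∈ stdSimplex ℝ (Fin r)}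
          = ⋂ z, (fun u : C(Icc (0:ℝ) T0, Fin r → ℝ) => u z) ⁻¹' stdSimplex ℝ (Fin r) := by
        ext u; simp [Set.mem_iInter]
      rw [he]
      exact isClosed_iInter fun z =>
        (isClosed_stdSimplex _ _).preimage (continuous_eval_const z)
    exact hcl.completeSpace_coe
  haveI : Nonempty {u : C(Icc (0:ℝ) T0, Fin r → ℝ) // ∀ z, u z ∈ stdSimplex ℝ (Fin r)} :=
    ⟨⟨ContinuousMap.const _ ν, fun _ => hν⟩⟩
  set X := {u : C(Icc (0:ℝ) T0, Fin r → ℝ) // ∀ z, u z ∈ stdSimplex ℝ (Fin r)} with hX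
  -- extension of paths to ℝ
  have hext_cont : ∀ u : X, Continuous (Set.IccExtend hle ⇑u.1) := fun u =>
    u.1.continuous.Icc_extend'
  have hextS : ∀ u : X, ∀ s : ℝ, Set.IccExtend hle (⇑u.1) s ∈ stdSimplex ℝ (Fin r) :=
    fun u s => u.2 _
  -- integrand continuity
  have hInt : ∀ u : X, ∀ i : Fin r, Continuous fun s : ℝ =>
      Real.exp (C * s) * (fld M (Set.IccExtend hle (⇑u.1) s) i
        + C * Set.IccExtend hle (⇑u.1) s i) := by
    intro u i
    have h1 : Continuous fun s : ℝ => fld M (Set.IccExtend hle (⇑u.1) s) i :=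
      fld_comp_continuous M (hext_cont u) (hextS u) i
    have h2 : Continuous fun s : ℝ => Set.IccExtend hle (⇑u.1) s i :=
      (continuous_apply i).comp (hext_cont u)
    exact (Real.continuous_exp.comp (continuous_const.mul continuous_id)).mul
      (h1.add (continuous_const.mul h2))
  -- the raw Picard map
  set Φraw : X → ℝ → Fin r → ℝ := fun u t i => Real.exp (-(C * t)) * (ν i +
    ∫ s in (0:ℝ)..t, Real.exp (C * s) * (fld M (Set.IccExtend hle (⇑u.1) s) i
      + C * Set.IccExtend hle (⇑u.1) s i)) with hΦraw
  have hΦcont : ∀ u : X, Continuous (Φraw u) := by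
    intro u
    apply continuous_pi
    intro i
    apply Continuous.mul
    · exact Real.continuous_exp.comp (continuous_const.mul continuous_id).neg
    · exact continuous_const.add
        (intervalIntegral.continuous_primitive (fun a b => (hInt u i).intervalIntegrable a b) 0)
  have hΦmem : ∀ u : X, ∀ t ∈ Icc (0:ℝ) T0, Φraw u t ∈ stdSimplex ℝ (Fin r) := by
    intro u t ht
    constructor
    · intro i
      apply mul_nonneg (Real.exp_nonneg _)
      apply add_nonneg (hν.1 i)
      apply intervalIntegral.integral_nonneg ht.1
      intro s _
      exact mul_nonneg (Real.exp_nonneg _) (hgnn _ (hextS u s) i)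
    · have hintg : ∀ i ∈ Finset.univ, IntervalIntegrable (fun s : ℝ =>
          Real.exp (C * s) * (fld M (Set.IccExtend hle (⇑u.1) s) i
            + C * Set.IccExtend hle (⇑u.1) s i)) MeasureTheory.volume 0 t :=
        fun i _ => (hInt u i).intervalIntegrable 0 t
      have hexpC : ∀ s : ℝ, HasDerivAt (fun x : ℝ => Real.exp (C * x)) (Real.exp (C * s) * C) s := by
        intro s
        have h1 : HasDerivAt (fun x : ℝ => C * x) C s := by
          simpa using (hasDerivAt_id s).const_mul C
        exact (Real.hasDerivAt_exp (C * s)).comp s h1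
      calc ∑ i, Φraw u t i
          = Real.exp (-(C * t)) * (∑ i, ν i + ∑ i, ∫ s in (0:ℝ)..t,
            Real.exp (C * s) * (fld M (Set.IccExtend hle (⇑u.1) s) i
              + C * Set.IccExtend hle (⇑u.1) s i)) := by
            rw [hΦraw]; dsimp only
            rw [← Finset.mul_sum, Finset.sum_add_distrib]
        _ = Real.exp (-(C * t)) * (1 + ∫ s in (0:ℝ)..t, Real.exp (C * s) * C) := by
            rw [hν.2, ← intervalIntegral.integral_finset_sum hintg]
            congr 2
            apply intervalIntegral.integral_congr
            intro s _
            dsimp only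
            rw [← Finset.mul_sum, hgsum _ (hextS u s)]
        _ = Real.exp (-(C * t)) * Real.exp (C * t) := by
            rw [intervalIntegral.integral_eq_sub_of_hasDerivAt
              (fun s _ => hexpC s)
              (((Real.continuous_exp.comp (continuous_const.mul continuous_id)).mul
                continuous_const).intervalIntegrable 0 t)]
            simp
        _ = 1 := by rw [← Real.exp_add]; simp
  set Φ : X → X := fun u => ⟨⟨fun z => Φraw u z, (hΦcont u).comp continuous_subtype_val⟩,
    fun z => hΦmem u z z.2⟩ with hΦ
  have hΦlip : ∀ u v : X, dist (Φ u) (Φ v) ≤ (1/2 : ℝ) * dist u v := by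
    intro u v
    have hD : (0:ℝ) ≤ dist u v := dist_nonneg
    rw [Subtype.dist_eq, ContinuousMap.dist_le (by positivity)]
    intro z
    rw [dist_pi_le_iff (by positivity)]
    intro i
    have hz := z.2
    have hzl : (0:ℝ) ≤ (z : ℝ) := hz.1
    have hintu : IntervalIntegrable _ MeasureTheory.volume (0:ℝ) (z : ℝ) :=
      (hInt u i).intervalIntegrable 0 (z : ℝ)
    have hintv : IntervalIntegrable _ MeasureTheory.volume (0:ℝ) (z : ℝ) :=
      (hInt v i).intervalIntegrable 0 (z : ℝ)
    have key : Φraw u z i - Φraw v z i = Real.exp (-(C * z)) *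
        ∫ s in (0:ℝ)..(z:ℝ), Real.exp (C * s) *
          ((fld M (Set.IccExtend hle (⇑u.1) s) i + C * Set.IccExtend hle (⇑u.1) s i)
           - (fld M (Set.IccExtend hle (⇑v.1) s) i + C * Set.IccExtend hle (⇑v.1) s i)) := by
      rw [hΦraw]; dsimp only
      rw [← mul_sub, add_sub_add_left_eq_sub, ← intervalIntegral.integral_sub hintu hintv]
      congr 1
      apply intervalIntegral.integral_congr
      intro s _
      ring
    show dist ((Φ u).1 z i) ((Φ v).1 z i) ≤ (1/2) * dist u v
    have happ : (Φ u).1 z i = Φraw u z i := rfl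
    have happ' : (Φ v).1 z i = Φraw v z i := rfl
    rw [happ, happ', Real.dist_eq, key, abs_mul, abs_of_nonneg (Real.exp_nonneg _)]
    have hbd : ∀ s ∈ Set.uIoc (0:ℝ) (z:ℝ), ‖Real.exp (C * s) *
        ((fld M (Set.IccExtend hle (⇑u.1) s) i + C * Set.IccExtend hle (⇑u.1) s i)
         - (fld M (Set.IccExtend hle (⇑v.1) s) i + C * Set.IccExtend hle (⇑v.1) s i))‖
        ≤ Real.exp (C * z) * (Kg * dist u v) := by
      intro s hs
      have hs' : s ∈ Ioc (0:ℝ) (z:ℝ) := by rwa [Set.uIoc_of_le hzl] at hs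
      rw [Real.norm_eq_abs, abs_mul, abs_of_nonneg (Real.exp_nonneg _)]
      have hexple : Real.exp (C * s) ≤ Real.exp (C * z) :=
        Real.exp_le_exp.mpr (mul_le_mul_of_nonneg_left hs'.2 hC)
      have hdist : dist (Set.IccExtend hle (⇑u.1) s) (Set.IccExtend hle (⇑v.1) s)
          ≤ dist u v := by
        rw [Subtype.dist_eq]
        exact ContinuousMap.dist_apply_le_dist _
      have hg := hglip _ (hextS u s) _ (hextS v s) i
      have hg2 : |(fld M (Set.IccExtend hle (⇑u.1) s) i + C * Set.IccExtend hle (⇑u.1) s i)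
          - (fld M (Set.IccExtend hle (⇑v.1) s) i + C * Set.IccExtend hle (⇑v.1) s i)|
          ≤ Kg * dist u v := hg.trans (mul_le_mul_of_nonneg_left hdist hKg)
      exact mul_le_mul hexple hg2 (abs_nonneg _) (Real.exp_nonneg _)
    calc Real.exp (-(C * z)) * |∫ s in (0:ℝ)..(z:ℝ), Real.exp (C * s) *
          ((fld M (Set.IccExtend hle (⇑u.1) s) i + C * Set.IccExtend hle (⇑u.1) s i)
           - (fld M (Set.IccExtend hle (⇑v.1) s) i + C * Set.IccExtend hle (⇑v.1) s i))|
        ≤ Real.exp (-(C * z)) * (Real.exp (C * z) * (Kg * dist u v) * |(z:ℝ) - 0|) := by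
          apply mul_le_mul_of_nonneg_left ?_ (Real.exp_nonneg _)
          exact intervalIntegral.norm_integral_le_of_norm_le_const hbd
      _ = Kg * dist u v * (z:ℝ) := by
          rw [sub_zero, abs_of_nonneg hzl, ← mul_assoc, ← mul_assoc, ← Real.exp_add]
          simp
      _ ≤ (1/2 : ℝ) * dist u v := by
          have hzle : (z : ℝ) ≤ T0 := hz.2
          have h1 : Kg * dist u v * (z:ℝ) ≤ Kg * dist u v * T0 := by
            apply mul_le_mul_of_nonneg_left hzle (by positivity)
          nlinarith [mul_le_mul_of_nonneg_right hsmall hD]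
  have hCW : ContractingWith ((1 : NNReal)/2) Φ := by
    constructor
    · exact_mod_cast (by norm_num : ((1:ℝ)/2) < 1)
    · apply LipschitzWith.of_dist_le_mul
      intro u v
      have hc : ((((1 : NNReal)/2) : NNReal) : ℝ) = 1/2 := by norm_num
      rw [hc]
      exact hΦlip u v
  set u : X := ContractingWith.fixedPoint Φ hCW with hu
  have hufix : Φ u = u := hCW.fixedPoint_isFixedPt
  set μ : ℝ → Fin r → ℝ := Set.IccExtend hle ⇑u.1 with hμ
  have hμcont : Continuous μ := hext_cont u
  have hμS : ∀ t, μ t ∈ stdSimplex ℝ (Fin r) := fun t => hextS u t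
  have hduh : ∀ t ∈ Icc (0:ℝ) T0, ∀ i, μ t i = Real.exp (-(C * t)) * (ν i +
      ∫ s in (0:ℝ)..t, Real.exp (C * s) * (fld M (μ s) i + C * μ s i)) := by
    intro t ht i
    have h1 : μ t = u.1 ⟨t, ht⟩ := Set.IccExtend_of_mem hle _ ht
    have h2 : (Φ u).1 ⟨t, ht⟩ = u.1 ⟨t, ht⟩ := by rw [hufix]
    have h3 : (Φ u).1 ⟨t, ht⟩ = Φraw u t := rfl
    rw [h1, ← h2, h3]
  -- continuity of the fld along μ
  have hGc : ∀ i : Fin r, Continuous fun s : ℝ => fld M (μ s) i + C * μ s i := by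
    intro i
    exact (fld_comp_continuous M hμcont hμS i).add
      (continuous_const.mul ((continuous_apply i).comp hμcont))
  have hIc : ∀ i : Fin r, Continuous fun s : ℝ => Real.exp (C * s) * (fld M (μ s) i + C * μ s i) :=
    fun i => (Real.continuous_exp.comp (continuous_const.mul continuous_id)).mul (hGc i)
  -- the auxiliary function and its derivative
  have heq : ∀ t ∈ Icc (0:ℝ) T0, ∀ i, μ t i = ν i + ∫ s in (0:ℝ)..t, fld M (μ s) i := by
    intro t ht i
    set w : ℝ → ℝ := fun t' => ν i + ∫ s in (0:ℝ)..t', Real.exp (C * s) *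
      (fld M (μ s) i + C * μ s i) with hw
    set Fe : ℝ → ℝ := fun t' => Real.exp (-(C * t')) * w t' with hFe
    have hwc : Continuous w := continuous_const.add
      (intervalIntegral.continuous_primitive (fun a b => (hIc i).intervalIntegrable a b) 0)
    have hFec : Continuous Fe :=
      (Real.continuous_exp.comp (continuous_const.mul continuous_id).neg).mul hwc
    have hwd : ∀ t' : ℝ, HasDerivAt w (Real.exp (C * t') * (fld M (μ t') i + C * μ t' i)) t' := by
      intro t'
      apply HasDerivAt.const_add
      exact ((hIc i).integral_hasStrictDerivAt 0 t').hasDerivAt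
    have hFed : ∀ t' : ℝ, HasDerivAt Fe ((fld M (μ t') i + C * μ t' i) - C * Fe t') t' := by
      intro t'
      have hed : HasDerivAt (fun x : ℝ => Real.exp (-(C * x))) (Real.exp (-(C * t')) * (-C)) t' := by
        have h1 : HasDerivAt (fun x : ℝ => -(C * x)) (-C) t' := by
          exact (((hasDerivAt_id t').const_mul C).neg).congr_deriv (by simp)
        exact (Real.hasDerivAt_exp (-(C * t'))).comp t' h1
      have := hed.mul (hwd t')
      refine this.congr_deriv ?_
      have hexp1 : Real.exp (-(C * t')) * Real.exp (C * t') = 1 := by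
        rw [← Real.exp_add]; simp
      rw [hFe]
      dsimp only
      linear_combination (fld M (μ t') i + C * μ t' i) * hexp1
    have hint : ∫ s in (0:ℝ)..t, ((fld M (μ s) i + C * μ s i) - C * Fe s) = Fe t - Fe 0 :=
      intervalIntegral.integral_eq_sub_of_hasDerivAt (fun s _ => hFed s)
        (((hGc i).sub (continuous_const.mul hFec)).intervalIntegrable 0 t)
    have hFe0 : Fe 0 = ν i := by
      rw [hFe, hw]
      simp
    have hFet : Fe t = μ t i := (hduh t ht i).symm
    have hcongr : ∫ s in (0:ℝ)..t, ((fld M (μ s) i + C * μ s i) - C * Fe s)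
        = ∫ s in (0:ℝ)..t, fld M (μ s) i := by
      apply intervalIntegral.integral_congr
      intro s hs
      have hs' : s ∈ Icc (0:ℝ) T0 := by
        rw [Set.uIcc_of_le ht.1] at hs
        exact ⟨hs.1, hs.2.trans ht.2⟩
      have := (hduh s hs' i).symm
      rw [hFe] at *
      dsimp only at *
      rw [this]
      ring
    rw [← hcongr, hint, hFe0, hFet]
    ring
  refine ⟨μ, hμcont, hμS, ?_, heq⟩
  funext i
  have := heq 0 ⟨le_refl 0, hle⟩ i
  simpa using this

lemma exists_global (M : MeanFieldModel r) (hr : 0 < r) (ν : Fin r → ℝ)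
    (hν : ν ∈ stdSimplex ℝ (Fin r)) :
    ∃ η : ℝ → Fin r → ℝ, Continuous η ∧ (∀ t, η t ∈ stdSimplex ℝ (Fin r)) ∧ η 0 = ν ∧
      ∀ t, 0 ≤ t → ∀ i, η t i = ν i + ∫ s in Ioc (0:ℝ) t, fld M (η s) i := by
  classical
  obtain ⟨C, Kg, hC, hKg, hgnn, hgsum, hglip⟩ := exists_field_consts M hr
  set T0 : ℝ := 1 / (2 * (Kg + 1)) with hT0def
  have hT0 : 0 < T0 := by positivity
  have hsmall : Kg * T0 ≤ 1/2 := by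
    rw [hT0def, mul_one_div, div_le_div_iff₀ (by positivity) (by norm_num)]
    linarith
  have loc : ∀ ν' ∈ stdSimplex ℝ (Fin r), ∃ μ : ℝ → Fin r → ℝ, Continuous μ ∧
      (∀ t, μ t ∈ stdSimplex ℝ (Fin r)) ∧ μ 0 = ν' ∧
      ∀ t ∈ Icc (0:ℝ) T0, ∀ i, μ t i = ν' i + ∫ s in (0:ℝ)..t, fld M (μ s) i :=
    fun ν' hν' => local_sol M C Kg T0 hC.le hKg hgnn hgsum hglip hT0 hsmall ν' hν'
  set locF : (Fin r → ℝ) → ℝ → Fin r → ℝ := fun ν' =>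
    if h : ν' ∈ stdSimplex ℝ (Fin r) then (loc ν' h).choose else fun _ _ => 0 with hlocF
  have hlocP : ∀ ν', ν' ∈ stdSimplex ℝ (Fin r) → Continuous (locF ν') ∧
      (∀ t, locF ν' t ∈ stdSimplex ℝ (Fin r)) ∧ locF ν' 0 = ν' ∧
      ∀ t ∈ Icc (0:ℝ) T0, ∀ i, locF ν' t i = ν' i + ∫ s in (0:ℝ)..t, fld M (locF ν' s) i := by
    intro ν' h
    have he : locF ν' = (loc ν' h).choose := by rw [hlocF]; dsimp only; rw [dif_pos h]
    rw [he]
    exact (loc ν' h).choose_spec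
  set hseq : ℕ → ℝ → Fin r → ℝ := fun n => Nat.rec (fun _ => ν)
    (fun n hn => fun t => if t ≤ (n:ℝ) * T0 then hn t
      else locF (hn ((n:ℝ)*T0)) (t - (n:ℝ)*T0)) n with hhseq
  have hseqS : ∀ (n : ℕ) (t : ℝ), hseq (n+1) t = if t ≤ (n:ℝ)*T0 then hseq n t
      else locF (hseq n ((n:ℝ)*T0)) (t - (n:ℝ)*T0) := fun n t => rfl
  have hP : ∀ n : ℕ, Continuous (hseq n) ∧ (∀ t, hseq n t ∈ stdSimplex ℝ (Fin r)) ∧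
      (∀ t ∈ Icc (0:ℝ) ((n:ℝ)*T0), ∀ i, hseq n t i = ν i + ∫ s in (0:ℝ)..t, fld M (hseq n s) i) := by
    intro n
    induction n with
    | zero =>
      have h00 : hseq 0 = fun _ : ℝ => ν := rfl
      refine ⟨by rw [h00]; exact continuous_const, fun _ => by rw [h00]; exact hν, ?_⟩
      intro t ht i
      have ht0 : t = 0 := by
        simp only [Nat.cast_zero, zero_mul] at ht
        exact le_antisymm ht.2 ht.1
      rw [ht0, h00]
      simp
    | succ n ih =>
      obtain ⟨ihc, ihS, iheq⟩ := ih
      have hνn : hseq n ((n:ℝ)*T0) ∈ stdSimplex ℝ (Fin r) := ihS _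
      obtain ⟨hc, hS, h0, hloceq⟩ := hlocP _ hνn
      have hnT0 : (0:ℝ) ≤ (n:ℝ)*T0 := by positivity
      have hcont1 : Continuous (hseq (n+1)) := by
        have : hseq (n+1) = fun t => if t ≤ (n:ℝ)*T0 then hseq n t
            else locF (hseq n ((n:ℝ)*T0)) (t - (n:ℝ)*T0) := funext (hseqS n)
        rw [this]
        apply Continuous.if_le ihc (hc.comp (continuous_id.sub continuous_const))
          continuous_id continuous_const
        intro t hteq
        simp only [id_eq] at hteq
        rw [hteq]
        simp only [Function.comp_apply, Pi.sub_apply, id_eq, sub_self, h0]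
      have hS1 : ∀ t, hseq (n+1) t ∈ stdSimplex ℝ (Fin r) := by
        intro t
        rw [hseqS n t]
        by_cases htn : t ≤ (n:ℝ)*T0
        · rw [if_pos htn]; exact ihS t
        · rw [if_neg htn]; exact hS _
      refine ⟨hcont1, hS1, ?_⟩
      intro t ht i
      have htub : t ≤ ((n:ℝ)+1)*T0 := by
        have := ht.2
        push_cast at this
        exact this
      by_cases htn : t ≤ (n:ℝ)*T0
      · have e0 : hseq (n+1) t = hseq n t := by rw [hseqS n t, if_pos htn]
        rw [e0, iheq t ⟨ht.1, htn⟩ i]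
        congr 1
        apply intervalIntegral.integral_congr
        intro s hs
        have hs' : s ≤ (n:ℝ)*T0 := by
          rw [Set.uIcc_of_le ht.1] at hs
          exact hs.2.trans htn
        dsimp only
        rw [hseqS n s, if_pos hs']
      · push_neg at htn
        have h1 : t - (n:ℝ)*T0 ∈ Icc (0:ℝ) T0 := ⟨by linarith, by linarith⟩
        have e1 : hseq (n+1) t = locF (hseq n ((n:ℝ)*T0)) (t - (n:ℝ)*T0) := by
          rw [hseqS n t, if_neg (not_le.mpr htn)]
        have e2 := hloceq _ h1 i
        have e3 : ∫ s in ((n:ℝ)*T0)..t, fld M (locF (hseq n ((n:ℝ)*T0)) (s - (n:ℝ)*T0)) i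
            = ∫ s in (0:ℝ)..(t - (n:ℝ)*T0), fld M (locF (hseq n ((n:ℝ)*T0)) s) i := by
          rw [intervalIntegral.integral_comp_sub_right
            (fun s => fld M (locF (hseq n ((n:ℝ)*T0)) s) i) ((n:ℝ)*T0)]
          norm_num
        have e4 : Set.EqOn (fun s => fld M (hseq (n+1) s) i)
            (fun s => fld M (locF (hseq n ((n:ℝ)*T0)) (s - (n:ℝ)*T0)) i)
            (Set.uIcc ((n:ℝ)*T0) t) := by
          intro s hs
          rw [Set.uIcc_of_le htn.le] at hs
          dsimp only
          rw [hseqS n s]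
          by_cases hsn : s ≤ (n:ℝ)*T0
          · have hseq' : s = (n:ℝ)*T0 := le_antisymm hsn hs.1
            rw [if_pos hsn, hseq', sub_self, h0]
          · rw [if_neg hsn]
        have hint1 : IntervalIntegrable (fun s => fld M (hseq (n+1) s) i)
            MeasureTheory.volume 0 ((n:ℝ)*T0) :=
          (fld_comp_continuous M hcont1 hS1 i).intervalIntegrable _ _
        have hint2 : IntervalIntegrable (fun s => fld M (hseq (n+1) s) i)
            MeasureTheory.volume ((n:ℝ)*T0) t :=
          (fld_comp_continuous M hcont1 hS1 i).intervalIntegrable _ _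
        have e5 : ∫ s in (0:ℝ)..((n:ℝ)*T0), fld M (hseq (n+1) s) i
            = hseq n ((n:ℝ)*T0) i - ν i := by
          have e5a : ∫ s in (0:ℝ)..((n:ℝ)*T0), fld M (hseq (n+1) s) i
              = ∫ s in (0:ℝ)..((n:ℝ)*T0), fld M (hseq n s) i := by
            apply intervalIntegral.integral_congr
            intro s hs
            rw [Set.uIcc_of_le hnT0] at hs
            dsimp only
            rw [hseqS n s, if_pos hs.2]
          rw [e5a, iheq ((n:ℝ)*T0) ⟨hnT0, le_refl _⟩ i]
          ring
        have e6 : ∫ s in (0:ℝ)..t, fld M (hseq (n+1) s) i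
            = (∫ s in (0:ℝ)..((n:ℝ)*T0), fld M (hseq (n+1) s) i)
              + ∫ s in ((n:ℝ)*T0)..t, fld M (hseq (n+1) s) i :=
          (intervalIntegral.integral_add_adjacent_intervals hint1 hint2).symm
        rw [e1, e2, e6, e5, ← e3, ← intervalIntegral.integral_congr e4]
        ring
  have hcoh : ∀ n m : ℕ, n ≤ m → ∀ t : ℝ, t ≤ (n:ℝ)*T0 → hseq m t = hseq n t := by
    intro n m hnm
    induction m, hnm using Nat.le_induction with
    | base => intro t _; rfl
    | succ m hm ih =>
      intro t ht
      have hcast : ((n:ℝ)) ≤ (m:ℝ) := by exact_mod_cast hm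
      rw [hseqS m t, if_pos (ht.trans (mul_le_mul_of_nonneg_right hcast hT0.le))]
      exact ih t ht
  set η : ℝ → Fin r → ℝ := fun t => hseq ⌈t/T0⌉₊ t with hη
  have hηeq : ∀ n : ℕ, ∀ t : ℝ, t ≤ (n:ℝ)*T0 → η t = hseq n t := by
    intro n t ht
    have hk : ⌈t/T0⌉₊ ≤ n := by
      apply Nat.ceil_le.mpr
      rw [div_le_iff₀ hT0]
      linarith
    have htk : t ≤ (⌈t/T0⌉₊ : ℝ) * T0 := (div_le_iff₀ hT0).mp (Nat.le_ceil (t/T0))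
    exact (hcoh _ n hk t htk).symm
  have hηS : ∀ t, η t ∈ stdSimplex ℝ (Fin r) := fun t => (hP _).2.1 t
  have hη0 : η 0 = ν := by
    have h1 := hηeq 0 0 (by simp)
    have h00 : hseq 0 = fun _ : ℝ => ν := rfl
    rw [h1, h00]
  have hηcont : Continuous η := by
    rw [continuous_iff_continuousAt]
    intro t0
    set n : ℕ := ⌈t0/T0⌉₊ + 1 with hn
    have hlt : t0 < (n:ℝ)*T0 := by
      have h1 : t0 ≤ (⌈t0/T0⌉₊ : ℝ) * T0 := (div_le_iff₀ hT0).mp (Nat.le_ceil (t0/T0))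
      have h2 : ((⌈t0/T0⌉₊ : ℝ)) * T0 < (n:ℝ)*T0 := by
        apply mul_lt_mul_of_pos_right ?_ hT0
        rw [hn]
        push_cast
        linarith
      linarith
    have hev : η =ᶠ[nhds t0] hseq n := by
      apply Filter.eventually_of_mem (Iio_mem_nhds hlt)
      intro t ht
      exact hηeq n t (le_of_lt ht)
    exact ((hP n).1.continuousAt).congr hev.symm
  refine ⟨η, hηcont, hηS, hη0, ?_⟩
  intro t ht0 i
  set n : ℕ := ⌈t/T0⌉₊ with hn
  have htn : t ≤ (n:ℝ)*T0 := (div_le_iff₀ hT0).mp (Nat.le_ceil (t/T0))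
  calc η t i = ν i + ∫ s in (0:ℝ)..t, fld M (hseq n s) i := by
        rw [hηeq n t htn]
        exact (hP n).2.2 t ⟨ht0, htn⟩ i
    _ = ν i + ∫ s in (0:ℝ)..t, fld M (η s) i := by
        congr 1
        apply intervalIntegral.integral_congr
        intro s hs
        rw [Set.uIcc_of_le ht0] at hs
        dsimp only
        rw [hηeq n s (hs.2.trans htn)]
    _ = ν i + ∫ s in Ioc (0:ℝ) t, fld M (η s) i := by
        rw [intervalIntegral.integral_of_le ht0]

lemma key_solution (M : MeanFieldModel r) (hr : 0 < r) (ν : Fin r → ℝ)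
    (hν : ν ∈ stdSimplex ℝ (Fin r)) :
    ∃ η : ℝ → Fin r → ℝ, IsMVSolution M η ∧ η 0 = ν ∧ (∀ t, η t ∈ stdSimplex ℝ (Fin r)) ∧
      ∀ T : ℝ, 0 < T → SEnd M T ν (η T) = 0 := by
  classical
  obtain ⟨η, hcont, hS, h0, heq⟩ := exists_global M hr ν hν
  have hfc : ∀ i, Continuous fun t => fld M (η t) i := fun i => fld_comp_continuous M hcont hS i
  have hintg : ∀ T : ℝ, 0 < T → ∀ i,
      MeasureTheory.IntegrableOn (fun t => ∑ j, M.lam j i (η t) * η t j) (Icc 0 T) := by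
    intro T _ i
    exact (hfc i).integrableOn_Icc
  have hMV : IsMVSolution M η := by
    refine ⟨fun t _ => hS t, hintg, ?_⟩
    intro t ht i
    rw [h0]
    exact heq t ht i
  set L : ℝ → Fin r → Fin r → ℝ := fun t a b => M.lam a b (η t) with hL
  have hrate : IsRateMatrix M L := by
    refine ⟨?_, ?_, ?_, ?_⟩
    · intro i j
      exact ((lam_continuousOn M i j).comp_continuous hcont hS).measurable
    · intro t i j hij
      exact lam_offdiag_nonneg M hij (hS t)
    · intro t i j hij hE
      exact M.lam_off i j hij hE (η t)
    · intro t i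
      exact M.lam_diag i (η t)
  have hsolves : ∀ T : ℝ, 0 < T → SolvesODE L η T := by
    intro T hT
    refine ⟨fun i => hintg T hT i, ?_⟩
    intro t ht i
    rw [h0]
    exact heq t ht.1 i
  have hcost : ∀ T : ℝ, runningCost M η L T = 0 := by
    intro T
    have hzero : ∀ t : ℝ, (∑ p ∈ M.E, η t p.1 * M.lam p.1 p.2 (η t) *
        tauStar (L t p.1 p.2 / M.lam p.1 p.2 (η t) - 1)) = 0 := by
      intro t
      apply Finset.sum_eq_zero
      intro p hp
      have hlam : 0 < M.lam p.1 p.2 (η t) := lt_of_lt_of_le M.c_pos (M.lam_lower p hp _ (hS t))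
      have harg : L t p.1 p.2 / M.lam p.1 p.2 (η t) - 1 = 0 := by
        rw [hL]
        dsimp only
        rw [div_self hlam.ne', sub_self]
      rw [harg]
      have htau : tauStar 0 = 0 := by simp [tauStar]
      rw [htau, mul_zero]
    unfold runningCost
    rw [show (fun t => ENNReal.ofReal (∑ p ∈ M.E, η t p.1 * M.lam p.1 p.2 (η t) *
        tauStar (L t p.1 p.2 / M.lam p.1 p.2 (η t) - 1))) = fun _ : ℝ => (0:ℝ≥0∞) from
      funext fun t => by rw [hzero t, ENNReal.ofReal_zero]]
    simp
  have hSEnd : ∀ T : ℝ, 0 < T → SEnd M T ν (η T) = 0 := by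
    intro T hT
    apply le_antisymm ?_ zero_le
    calc SEnd M T ν (η T) ≤ SPath M T ν η := iInf₂_le η ⟨h0, rfl⟩
      _ ≤ runningCost M η L T := iInf₂_le L ⟨hrate, hsolves T hT, h0, fun t _ => hS t⟩
      _ = 0 := hcost T
  exact ⟨η, hMV, h0, hS, hSEnd⟩

end Stmt13
end

/-- under assumption (B), a nonnegative lower semicontinuous
solution `s` of the dynamic programming equation that vanishes somewhere
(i) vanishes at some point of some `K i₀`, and (ii) is constant on each `K i`,
with nonnegative values `s₁, …, s_l`. -/
theorem stmt13 (r : ℕ) (hr : 0 < r) (M : MeanFieldModel r)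
    (l : ℕ) (K : Fin l → Set (Fin r → ℝ)) (hB : AssumptionB M l K)
    (s : (Fin r → ℝ) → ℝ)
    (hs_nonneg : ∀ ξ ∈ stdSimplex ℝ (Fin r), 0 ≤ s ξ)
    (hs_lsc : LowerSemicontinuousOn s (stdSimplex ℝ (Fin r)))
    (hDPE : SatisfiesDPE M s)
    (hzero : ∃ ν ∈ stdSimplex ℝ (Fin r), s ν = 0) :
    (∃ (i₀ : Fin l) (ξ₀ : Fin r → ℝ), ξ₀ ∈ K i₀ ∧ s ξ₀ = 0) ∧
    (∃ sv : Fin l → ℝ, (∀ i, 0 ≤ sv i) ∧ ∀ i, ∀ ξ ∈ K i, s ξ = sv i) := by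
  classical
  obtain ⟨hKcomp, hKsub, hKequiv, hKsep, hKomega⟩ := hB
  have key2 : ∀ ν ξ : Fin r → ℝ, ν ∈ stdSimplex ℝ (Fin r) → ξ ∈ stdSimplex ℝ (Fin r) →
      quasipotential M ν ξ = 0 → s ξ ≤ s ν := by
    intro ν ξ hν hξ hq
    rw [← ENNReal.ofReal_le_ofReal_iff (hs_nonneg ν hν)]
    apply ENNReal.le_of_forall_pos_le_add
    intro ε hε _
    have h1 : (⨅ (T : ℝ) (_ : 0 < T), SEnd M T ν ξ) < (ε : ℝ≥0∞) := by
      have h0 : quasipotential M ν ξ < (ε : ℝ≥0∞) := by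
        rw [hq]
        exact ENNReal.coe_pos.mpr hε
      exact h0
    rw [iInf_lt_iff] at h1
    obtain ⟨T, h1⟩ := h1
    rw [iInf_lt_iff] at h1
    obtain ⟨hT, h1⟩ := h1
    calc ENNReal.ofReal (s ξ) = ⨅ ν' ∈ stdSimplex ℝ (Fin r),
        (ENNReal.ofReal (s ν') + SEnd M T ν' ξ) := hDPE T hT ξ hξ
      _ ≤ ENNReal.ofReal (s ν) + SEnd M T ν ξ := iInf₂_le ν hν
      _ ≤ ENNReal.ofReal (s ν) + ε := add_le_add_right h1.le _
  have hconst : ∀ i : Fin l, ∀ ν ∈ K i, ∀ ξ ∈ K i, s ξ = s ν := by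
    intro i ν hνK ξ hξK
    have hν := hKsub i hνK
    have hξ := hKsub i hξK
    have hvq := hKequiv i ν hνK ξ hξK
    exact le_antisymm (key2 ν ξ hν hξ hvq.1) (key2 ξ ν hξ hν hvq.2)
  constructor
  · obtain ⟨ν, hν, hsν⟩ := hzero
    obtain ⟨η, hMV, hη0, hηS, hSEnd⟩ := Stmt13.key_solution M hr ν hν
    have hszero : ∀ T : ℝ, 0 < T → s (η T) = 0 := by
      intro T hT
      have h3 : ENNReal.ofReal (s (η T)) ≤ 0 := by
        calc ENNReal.ofReal (s (η T)) = ⨅ ν' ∈ stdSimplex ℝ (Fin r),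
            (ENNReal.ofReal (s ν') + SEnd M T ν' (η T)) := hDPE T hT (η T) (hηS T)
          _ ≤ ENNReal.ofReal (s ν) + SEnd M T ν (η T) := iInf₂_le ν hν
          _ = 0 := by rw [hsν, hSEnd T hT, ENNReal.ofReal_zero, zero_add]
      have h4 : s (η T) ≤ 0 := ENNReal.ofReal_eq_zero.mp (le_antisymm h3 zero_le)
      exact le_antisymm h4 (hs_nonneg _ (hηS T))
    obtain ⟨i₀, hKi⟩ := hKomega η hMV
    set Cn : ℕ → Set (Fin r → ℝ) := fun n => closure (η '' Ici ((n:ℝ)+1)) with hCn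
    have hCne : ∀ n, (Cn n).Nonempty := fun n =>
      ⟨η ((n:ℝ)+1), subset_closure (Set.mem_image_of_mem η Set.self_mem_Ici)⟩
    have hCsubS : ∀ n, Cn n ⊆ stdSimplex ℝ (Fin r) := by
      intro n
      apply closure_minimal ?_ (isClosed_stdSimplex _ _)
      rintro x ⟨t, _, rfl⟩
      exact hηS t
    have hCcl : ∀ n, IsClosed (Cn n) := fun n => isClosed_closure
    have hCcomp : IsCompact (Cn 0) :=
      (isCompact_stdSimplex _ _).of_isClosed_subset (hCcl 0) (hCsubS 0)
    have hCdec : ∀ n, Cn (n+1) ⊆ Cn n := by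
      intro n
      apply closure_mono
      apply Set.image_mono
      apply Ici_subset_Ici.mpr
      push_cast
      linarith
    obtain ⟨ξ₀, hξ₀⟩ := IsCompact.nonempty_iInter_of_sequence_nonempty_isCompact_isClosed
      Cn hCdec hCne hCcomp hCcl
    rw [Set.mem_iInter] at hξ₀
    have hξ₀Ω : ξ₀ ∈ omegaSet η := by
      show ξ₀ ∈ ⋂ t ∈ Ioi (0:ℝ), closure (η '' Ici t)
      apply Set.mem_iInter₂.mpr
      intro t _
      have hn : t ≤ ((⌈t⌉₊:ℝ)+1) := le_trans (Nat.le_ceil t) (by linarith)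
      exact closure_mono (Set.image_mono (Ici_subset_Ici.mpr hn)) (hξ₀ ⌈t⌉₊)
    refine ⟨i₀, ξ₀, hKi hξ₀Ω, ?_⟩
    by_contra hne
    have hξ₀S : ξ₀ ∈ stdSimplex ℝ (Fin r) := hCsubS 0 (hξ₀ 0)
    have hpos : 0 < s ξ₀ := lt_of_le_of_ne (hs_nonneg _ hξ₀S) (Ne.symm hne)
    have hlsc := hs_lsc ξ₀ hξ₀S 0 hpos
    have hA : ξ₀ ∈ closure (η '' Ici (1:ℝ)) := by
      have h5 := hξ₀ 0
      rw [hCn] at h5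
      simpa using h5
    rw [mem_closure_iff_nhdsWithin_neBot] at hA
    haveI := hA
    have hmono : nhdsWithin ξ₀ (η '' Ici (1:ℝ)) ≤ nhdsWithin ξ₀ (stdSimplex ℝ (Fin r)) :=
      nhdsWithin_mono ξ₀ (by rintro x ⟨t, _, rfl⟩; exact hηS t)
    have hev : ∀ᶠ x in nhdsWithin ξ₀ (η '' Ici (1:ℝ)), 0 < s x := hlsc.filter_mono hmono
    have hev2 : ∀ᶠ x in nhdsWithin ξ₀ (η '' Ici (1:ℝ)), x ∈ η '' Ici (1:ℝ) :=
      self_mem_nhdsWithin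
    obtain ⟨x, hx1, hx2⟩ := (hev.and hev2).exists
    obtain ⟨t, ht, rfl⟩ := hx2
    have h6 : s (η t) = 0 := hszero t (lt_of_lt_of_le one_pos ht)
    rw [h6] at hx1
    exact lt_irrefl 0 hx1
  · refine ⟨fun i => if h : (K i).Nonempty then s h.choose else 0, ?_, ?_⟩
    · intro i
      dsimp only
      by_cases h : (K i).Nonempty
      · rw [dif_pos h]
        exact hs_nonneg _ (hKsub i h.choose_spec)
      · rw [dif_neg h]
    · intro i ξ hξ
      have h : (K i).Nonempty := ⟨ξ, hξ⟩
      dsimp only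
      rw [dif_pos h]
      exact hconst i h.choose h.choose_spec ξ hξ
end
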